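/- arXiv:1912.05843 — 12 statements merged into one kernel-verified Lean document; each statement's English description precedes it below -/
import Mathlib

section
/- Let n ≥ 2 and let a_0, …, a_n be real numbers. For a real number x define the Reinsch sequences by d_n(x) = a_n, u_n(x) = a_n, and for k = n−1 down to 0: d_k(x) = 2(x−1)·u_{k+1}(x) + d_{k+1}(x) + a_k and u_k(x) = d_k(x) + u_{k+1}(x). Then the Reinsch sequence u_k coincides with the Clenshaw sequence: u_{n−1}(x) = 2x·u_n(x) + a_{n−1}, u_k(x) = 2x·u_{k+1}(x) − u_{k+2}(x) + a_k for 0 ≤ k ≤ n−2, and consequently p(x) = x·u_1(x) − u_2(x) + a_0. -/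
open Polynomial Finset

/-!
Eliminating `d` shows that the Reinsch sequence `u` satisfies the Clenshaw three-term
recurrence. For a Clenshaw sequence `b` the quantity
`∑_{i<k} aᵢ Tᵢ(x) + b_k T_k(x) - b_{k+1} T_{k-1}(x)` does not depend on `k`, by the
Chebyshev recurrence `T_{k+1} = 2x T_k - T_{k-1}`; comparing it at `k = 1` and at `k = n + 1`
(where `b` has been extended by zeros) gives `p(x) = a₀ + x b₁ - b₂`.
-/

open Polynomial.Chebyshev

section Clenshaw

variable {R : Type*} [CommRing R]

theorem reinsch_step (x : R) {a d u : ℕ → R} {k : ℕ}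
    (hd : d k = 2 * (x - 1) * u (k + 1) + d (k + 1) + a k)
    (hu : u k = d k + u (k + 1)) (hu' : u (k + 1) = d (k + 1) + u (k + 2)) :
    u k = 2 * x * u (k + 1) - u (k + 2) + a k := by
  linear_combination hu + hd - hu'

noncomputable def clenshawInvariant (a b : ℕ → R) (x : R) (k : ℕ) : R :=
  ∑ i ∈ range k, a i * (T R i).eval x + b k * (T R k).eval x
    - b (k + 1) * (T R ((k : ℤ) - 1)).eval x

theorem clenshawInvariant_succ {a b : ℕ → R} {x : R} {k : ℕ}
    (hk : b k = 2 * x * b (k + 1) - b (k + 2) + a k) :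
    clenshawInvariant a b x (k + 1) = clenshawInvariant a b x k := by
  have hT : (T R ((k : ℤ) + 1)).eval x
      = 2 * x * (T R k).eval x - (T R ((k : ℤ) - 1)).eval x := by
    simp [T_add_one]
  simp only [clenshawInvariant, sum_range_succ, Nat.cast_add, Nat.cast_one,
    add_sub_cancel_right]
  linear_combination b (k + 1) * hT - (T R k).eval x * hk

theorem clenshawInvariant_one (a b : ℕ → R) (x : R) :
    clenshawInvariant a b x 1 = a 0 + x * b 1 - b 2 := by
  simp [clenshawInvariant, T_one]
  ring

theorem clenshawInvariant_eq_sum {a b : ℕ → R} {x : R} {n : ℕ}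
    (h₁ : b (n + 1) = 0) (h₂ : b (n + 2) = 0) :
    clenshawInvariant a b x (n + 1) = ∑ i ∈ range (n + 1), a i * (T R i).eval x := by
  simp [clenshawInvariant, h₁, h₂]

theorem clenshaw_sum_eq {a b : ℕ → R} {x : R} {n : ℕ}
    (hb : ∀ k, 0 < k → k ≤ n → b k = 2 * x * b (k + 1) - b (k + 2) + a k)
    (h₁ : b (n + 1) = 0) (h₂ : b (n + 2) = 0) :
    ∑ i ∈ range (n + 1), a i * (T R i).eval x = a 0 + x * b 1 - b 2 := by
  have hconst : ∀ j ≤ n, clenshawInvariant a b x (j + 1) = clenshawInvariant a b x 1 := by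
    intro j hj
    induction j with
    | zero => rfl
    | succ j ih => rw [clenshawInvariant_succ (hb _ j.succ_pos hj), ih (by omega)]
  rw [← clenshawInvariant_eq_sum h₁ h₂, hconst n le_rfl, clenshawInvariant_one]

end Clenshaw

/-- The Reinsch variant of the Clenshaw algorithm computes the Clenshaw sequence,
hence evaluates `p(x) = ∑ aᵢ Tᵢ(x)`. -/
theorem reinsch_eq_clenshaw (n : ℕ) (hn : 2 ≤ n) (a : ℕ → ℝ) (x : ℝ) (d u : ℕ → ℝ)
    (hdn : d n = a n) (hun : u n = a n)
    (hrec : ∀ k, k < n → d k = 2 * (x - 1) * u (k + 1) + d (k + 1) + a k ∧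
      u k = d k + u (k + 1)) :
    u (n - 1) = 2 * x * u n + a (n - 1) ∧
    (∀ k, k ≤ n - 2 → u k = 2 * x * u (k + 1) - u (k + 2) + a k) ∧
    x * u 1 - u 2 + a 0 =
      ∑ i ∈ Finset.range (n + 1), a i * (Polynomial.Chebyshev.T ℝ i).eval x := by
  have hlast : u (n - 1) = 2 * x * u n + a (n - 1) := by
    obtain ⟨hd, hu⟩ := hrec (n - 1) (by omega)
    rw [Nat.sub_add_cancel (by omega)] at hd hu
    linear_combination hu + hd + hdn - hun
  have hclen : ∀ k, k ≤ n - 2 → u k = 2 * x * u (k + 1) - u (k + 2) + a k := fun k hk ↦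
    reinsch_step x (hrec k (by omega)).1 (hrec k (by omega)).2 (hrec (k + 1) (by omega)).2
  refine ⟨hlast, hclen, ?_⟩
  set b : ℕ → ℝ := fun k ↦ if k ≤ n then u k else 0
  have hb : ∀ k, 0 < k → k ≤ n → b k = 2 * x * b (k + 1) - b (k + 2) + a k := by
    intro k _ hk
    rcases (by omega : k = n ∨ k + 1 = n ∨ k ≤ n - 2) with rfl | hk | hk
    · simp [b, hun]
    · subst hk
      simpa [b] using hlast
    · simp [b, (by omega : k ≤ n), (by omega : k + 1 ≤ n), (by omega : k + 2 ≤ n), hclen k hk]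
  rw [clenshaw_sum_eq hb (by simp [b]) (by simp [b])]
  simp only [b, if_pos (by omega : 1 ≤ n), if_pos hn]
  ring
end

section
/- Let n ≥ 2, let a_0, …, a_n be real numbers, let a ∈ [−1,1], and let γ = a + i·√(1−a²) ∈ ℂ, so that γ and its conjugate γ̄ are the two roots of X² − 2aX + 1 (γ + γ̄ = 2a and γ·γ̄ = 1). For a real number x define complex sequences by z_n(x) = a_n, u_n(x) = a_n, and for k = n−1 down to 1: z_k(x) = 2(x−a)·u_{k+1}(x) + γ·z_{k+1}(x) + a_k and u_k(x) = z_k(x) + γ̄·u_{k+1}(x). Then every u_k(x) is real, u_{n−1}(x) = 2x·u_n(x) + a_{n−1}, u_k(x) = 2x·u_{k+1}(x) − u_{k+2}(x) + a_k for 1 ≤ k ≤ n−2, and consequently x·u_1(x) − u_2(x) + a_0 = p(x). -/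
/-!
Since `γ + γ̄ = 2c` and `γ γ̄ = 1`, eliminating `z` from two consecutive Reinsch steps gives the
Clenshaw recurrence `uₖ = 2x uₖ₊₁ − uₖ₊₂ + aₖ`. Hence `u` agrees on `[1, n]` with the real
Clenshaw sequence `bₖ` of `p` at `x`, and `p(x) = x b₁ − b₂ + a₀` follows by telescoping the
sum from the top with `Tₖ₊₁ = 2x Tₖ − Tₖ₋₁`.
-/

open Polynomial Finset Complex

namespace Polynomial.Chebyshev

variable {R : Type*} [CommRing R]

def clenshaw (a : ℕ → R) (x : R) (n k : ℕ) : R :=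
  if h : n < k then 0 else a k + 2 * x * clenshaw a x n (k + 1) - clenshaw a x n (k + 2)
termination_by n + 1 - k

variable (a : ℕ → R) (x : R) {n : ℕ}

theorem clenshaw_of_lt {k : ℕ} (h : n < k) : clenshaw a x n k = 0 := by
  rw [clenshaw, dif_pos h]

theorem clenshaw_of_le {k : ℕ} (h : k ≤ n) :
    clenshaw a x n k = a k + 2 * x * clenshaw a x n (k + 1) - clenshaw a x n (k + 2) := by
  rw [clenshaw, dif_neg (not_lt.2 h)]

theorem eval_T_add_two (m : ℕ) :
    (T R (m + 2 : ℕ)).eval x = 2 * x * (T R (m + 1 : ℕ)).eval x - (T R m).eval x := by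
  push_cast
  simp

theorem sum_Ico_mul_eval_T (m : ℕ) :
    ∑ i ∈ Ico (m + 1) (n + 1), a i * (T R i).eval x =
      clenshaw a x n (m + 1) * (T R (m + 1 : ℕ)).eval x -
        clenshaw a x n (m + 2) * (T R m).eval x := by
  rcases lt_or_ge n (m + 1) with h | h
  · rw [Ico_eq_empty (by omega), clenshaw_of_lt a x h, clenshaw_of_lt a x (by omega)]
    ring
  · rw [sum_eq_sum_Ico_succ_bot (by omega), sum_Ico_mul_eval_T (m + 1), eval_T_add_two,
      clenshaw_of_le a x h]
    ring
termination_by n + 1 - m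

theorem sum_range_mul_eval_T (n : ℕ) :
    ∑ i ∈ range (n + 1), a i * (T R i).eval x =
      x * clenshaw a x n 1 - clenshaw a x n 2 + a 0 := by
  rw [range_eq_Ico, sum_eq_sum_Ico_succ_bot n.succ_pos, sum_Ico_mul_eval_T]
  simp only [Nat.cast_zero, T_zero, eval_one, zero_add, Nat.cast_one, T_one, eval_X]
  ring

variable {S : Type*} [CommRing S]

theorem eq_map_clenshaw (f : R →+* S) {v : ℕ → S} (hn : v n = f (a n))
    (hn1 : v (n - 1) = 2 * f x * v n + f (a (n - 1)))
    (hrec : ∀ k, 1 ≤ k → k ≤ n - 2 → v k = 2 * f x * v (k + 1) - v (k + 2) + f (a k))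
    (k : ℕ) (hk : 1 ≤ k) (hkn : k ≤ n) : v k = f (clenshaw a x n k) := by
  have hclenshaw_n : clenshaw a x n n = a n := by
    rw [clenshaw_of_le a x le_rfl, clenshaw_of_lt a x (by omega), clenshaw_of_lt a x (by omega)]
    ring
  rcases (show k = n ∨ k + 1 = n ∨ k + 2 ≤ n by omega) with rfl | hk1 | h
  · rw [hn, hclenshaw_n]
  · rw [clenshaw_of_le a x hkn, clenshaw_of_lt a x (by omega : n < k + 2), hk1, hclenshaw_n,
      show k = n - 1 by omega, hn1, hn]
    simp only [map_sub, map_add, map_mul, map_ofNat, map_zero]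
    ring
  · rw [hrec k hk (by omega), eq_map_clenshaw f hn hn1 hrec (k + 1) (by omega) (by omega),
      eq_map_clenshaw f hn hn1 hrec (k + 2) (by omega) h, clenshaw_of_le a x hkn]
    simp only [map_sub, map_add, map_mul, map_ofNat]
    ring
termination_by n - k

end Polynomial.Chebyshev

section Reinsch

variable {R : Type*} [CommRing R] {γ γ' c x b : R} {z u : ℕ → R} {k : ℕ}

theorem clenshaw_rec_of_reinsch_rec (hsum : γ + γ' = 2 * c) (hprod : γ * γ' = 1)
    (hz : z k = 2 * (x - c) * u (k + 1) + γ * z (k + 1) + b)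
    (hu : u k = z k + γ' * u (k + 1)) (hu' : u (k + 1) = z (k + 1) + γ' * u (k + 2)) :
    u k = 2 * x * u (k + 1) - u (k + 2) + b := by
  linear_combination hu + hz - γ * hu' + u (k + 1) * hsum - u (k + 2) * hprod

theorem clenshaw_last_of_reinsch_last (hsum : γ + γ' = 2 * c)
    (hz : z k = 2 * (x - c) * u (k + 1) + γ * z (k + 1) + b)
    (hu : u k = z k + γ' * u (k + 1)) (hzu : z (k + 1) = u (k + 1)) :
    u k = 2 * x * u (k + 1) + b := by
  linear_combination hu + hz + γ * hzu + u (k + 1) * hsum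

end Reinsch

open ComplexConjugate in
theorem add_conj_ofReal_add_I_mul (c s : ℝ) : (c + I * s : ℂ) + conj (c + I * s) = 2 * c := by
  rw [add_conj]
  simp

open ComplexConjugate in
theorem mul_conj_ofReal_add_I_mul_sqrt {c : ℝ} (hc : c ∈ Set.Icc (-1 : ℝ) 1) :
    (c + I * Real.sqrt (1 - c ^ 2) : ℂ) * conj (c + I * Real.sqrt (1 - c ^ 2)) = 1 := by
  rw [mul_comm I, mul_conj, normSq_add_mul_I, Real.sq_sqrt (by nlinarith [hc.1, hc.2])]
  norm_num

open Polynomial.Chebyshev in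
/-- The generalized Reinsch recurrence (with `γ = a + i√(1-a²)`) computes the
Clenshaw sequence: every `uₖ(x)` is real, the Clenshaw recurrence holds, and
`x·u₁(x) − u₂(x) + a₀ = p(x)`. -/
theorem generalized_reinsch_eq_clenshaw (n : ℕ) (hn : 2 ≤ n) (a : ℕ → ℝ)
    (c : ℝ) (hc : c ∈ Set.Icc (-1 : ℝ) 1) (γ : ℂ)
    (hγ : γ = (c : ℂ) + Complex.I * Real.sqrt (1 - c ^ 2))
    (x : ℝ) (z u : ℕ → ℂ)
    (hzn : z n = (a n : ℂ)) (hun : u n = (a n : ℂ))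
    (hrec : ∀ k, 1 ≤ k → k ≤ n - 1 →
      z k = 2 * ((x : ℂ) - (c : ℂ)) * u (k + 1) + γ * z (k + 1) + (a k : ℂ) ∧
      u k = z k + (starRingEnd ℂ) γ * u (k + 1)) :
    (∀ k, 1 ≤ k → k ≤ n → (u k).im = 0) ∧
    u (n - 1) = 2 * (x : ℂ) * u n + (a (n - 1) : ℂ) ∧
    (∀ k, 1 ≤ k → k ≤ n - 2 → u k = 2 * (x : ℂ) * u (k + 1) - u (k + 2) + (a k : ℂ)) ∧
    (x : ℂ) * u 1 - u 2 + (a 0 : ℂ) =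
      ((∑ i ∈ Finset.range (n + 1), a i * (Polynomial.Chebyshev.T ℝ i).eval x : ℝ) : ℂ) := by
  have hsum : γ + starRingEnd ℂ γ = 2 * c := hγ ▸ add_conj_ofReal_add_I_mul _ _
  have hprod : γ * starRingEnd ℂ γ = 1 := hγ ▸ mul_conj_ofReal_add_I_mul_sqrt hc
  obtain ⟨m, rfl⟩ : ∃ m, n = m + 2 := ⟨n - 2, by omega⟩
  have hlast : u (m + 1) = 2 * x * u (m + 2) + a (m + 1) :=
    clenshaw_last_of_reinsch_last hsum (hrec (m + 1) (by omega) le_rfl).1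
      (hrec (m + 1) (by omega) le_rfl).2 (hzn.trans hun.symm)
  have hclenshaw : ∀ k, 1 ≤ k → k ≤ m → u k = 2 * x * u (k + 1) - u (k + 2) + a k :=
    fun k hk hkm => clenshaw_rec_of_reinsch_rec hsum hprod (hrec k hk (by omega)).1
      (hrec k hk (by omega)).2 (hrec (k + 1) (by omega) (by omega)).2
  have hu : ∀ k, 1 ≤ k → k ≤ m + 2 → u k = clenshaw a x (m + 2) k :=
    eq_map_clenshaw a x ofRealHom hun hlast hclenshaw
  refine ⟨fun k hk hkn => by rw [hu k hk hkn, ofReal_im], hlast, hclenshaw, ?_⟩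
  rw [hu 1 le_rfl (by omega), hu 2 (by omega) (by omega), sum_range_mul_eval_T]
  push_cast
  ring
end

section
/- Let n ≥ 2, a_0, …, a_n real, a ∈ (−1,1), r ≥ 0, and γ = a + i·√(1−a²). Define for real x the sequences z_n(x) = a_n, u_n(x) = a_n, and for k = n−1 down to 1: z_k(x) = 2(x−a)·u_{k+1}(x) + γ·z_{k+1}(x) + a_k and u_k(x) = z_k(x) + γ̄·u_{k+1}(x) (where γ̄ is the complex conjugate of γ). Define real radii by e_n = 0, f_n = 0, and for k = n−1 down to 1: f_k = 2r·|u_{k+1}(a)| + 2r·e_{k+1} + f_{k+1} and e_k = min(e_{k+1} + f_k, f_k/√(1−a²)). Then for every real x with |x − a| ≤ r and every k with 1 ≤ k ≤ n, one has |z_k(x) − z_k(a)| ≤ f_k and |u_k(x) − u_k(a)| ≤ e_k. -/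
open Polynomial Finset Complex

/-- Forward error analysis of the generalized Reinsch/Clenshaw recurrence:
the radii `eₖ`, `fₖ` bound the variation of `uₖ` and `zₖ` on `[a-r, a+r]`. -/
theorem ball_clenshaw_forward_radii (n : ℕ) (hn : 2 ≤ n) (a : ℕ → ℝ)
    (c : ℝ) (hc : c ∈ Set.Ioo (-1 : ℝ) 1) (r : ℝ) (hr : 0 ≤ r) (γ : ℂ)
    (hγ : γ = (c : ℂ) + Complex.I * Real.sqrt (1 - c ^ 2))
    (z u : ℝ → ℕ → ℂ)
    (hzn : ∀ x, z x n = (a n : ℂ)) (hun : ∀ x, u x n = (a n : ℂ))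
    (hrec : ∀ x, ∀ k, 1 ≤ k → k ≤ n - 1 →
      z x k = 2 * ((x : ℂ) - (c : ℂ)) * u x (k + 1) + γ * z x (k + 1) + (a k : ℂ) ∧
      u x k = z x k + (starRingEnd ℂ) γ * u x (k + 1))
    (e f : ℕ → ℝ) (hen : e n = 0) (hfn : f n = 0)
    (href : ∀ k, 1 ≤ k → k ≤ n - 1 →
      f k = 2 * r * ‖u c (k + 1)‖ + 2 * r * e (k + 1) + f (k + 1) ∧
      e k = min (e (k + 1) + f k) (f k / Real.sqrt (1 - c ^ 2))) :
    ∀ x : ℝ, |x - c| ≤ r → ∀ k, 1 ≤ k → k ≤ n →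
      ‖z x k - z c k‖ ≤ f k ∧ ‖u x k - u c k‖ ≤ e k := by
  obtain ⟨hc1, hc2⟩ := hc
  set s : ℝ := Real.sqrt (1 - c ^ 2) with hs_def
  have hc2' : c ^ 2 < 1 := by nlinarith
  have hspos : 0 < s := Real.sqrt_pos.mpr (by linarith)
  have hsq : s ^ 2 = 1 - c ^ 2 := Real.sq_sqrt (by linarith)
  have hγre : γ.re = c := by simp [hγ]
  have hγim : γ.im = s := by simp [hγ]
  have hγconj : γ * (starRingEnd ℂ) γ = 1 := by
    have h2 : Complex.normSq γ = 1 := by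
      rw [Complex.normSq_apply, hγre, hγim]; nlinarith
    rw [Complex.mul_conj, h2, Complex.ofReal_one]
  have habsγ : ‖γ‖ = 1 := by
    have := Complex.normSq_eq_norm_sq γ
    have h2 : Complex.normSq γ = 1 := by
      rw [Complex.normSq_apply, hγre, hγim]; nlinarith
    nlinarith [norm_nonneg γ]
  have key : ∀ d k, 1 ≤ k → k + d = n →
      (∀ x : ℝ, (u x k).im = 0) ∧
      (∀ x : ℝ, (γ * z x k).im = s * (u x k).re) ∧
      (∀ x : ℝ, |x - c| ≤ r →
        ‖z x k - z c k‖ ≤ f k ∧ ‖u x k - u c k‖ ≤ e k) := by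
    intro d
    induction d with
    | zero =>
      intro k hk1 hk
      simp only [Nat.add_zero] at hk
      subst hk
      refine ⟨fun x => by simp [hun], fun x => by simp [hun, hzn, Complex.mul_im, hγre, hγim],
        fun x hx => by simp [hun, hzn, hen, hfn]⟩
    | succ d ih =>
      intro k hk1 hkd
      obtain ⟨A1, B1, C1⟩ := ih (k + 1) (by omega) (by omega)
      have hkle : k ≤ n - 1 := by omega
      have hz : ∀ x : ℝ, z x k = 2 * ((x : ℂ) - (c : ℂ)) * u x (k + 1) + γ * z x (k + 1) + (a k : ℂ) :=
        fun x => (hrec x k hk1 hkle).1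
      have hu : ∀ x : ℝ, u x k = z x k + (starRingEnd ℂ) γ * u x (k + 1) :=
        fun x => (hrec x k hk1 hkle).2
      obtain ⟨hf, he⟩ := href k hk1 hkle
      -- A(k)
      have A : ∀ x : ℝ, (u x k).im = 0 := by
        intro x
        rw [hu x, hz x]
        have hB := B1 x
        simp only [Complex.mul_im, hγre, hγim] at hB
        simp only [Complex.add_im, Complex.mul_im, Complex.conj_re, Complex.conj_im,
          Complex.ofReal_im, Complex.sub_im, Complex.sub_re, Complex.ofReal_re,
          Complex.mul_re, Complex.re_ofNat, Complex.im_ofNat, hγre, hγim, A1 x]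
        nlinarith [hB]
      -- B(k)
      have B : ∀ x : ℝ, (γ * z x k).im = s * (u x k).re := by
        intro x
        have hzk : z x k = u x k - (starRingEnd ℂ) γ * u x (k + 1) := by
          rw [hu x]; ring
        have : γ * z x k = γ * u x k - u x (k + 1) := by
          rw [hzk]; rw [mul_sub, ← mul_assoc, hγconj]; ring
        rw [this]
        simp only [Complex.sub_im, Complex.mul_im, hγre, hγim, A1 x, A x]
        ring
      refine ⟨A, B, fun x hx => ?_⟩
      obtain ⟨hCz, hCu⟩ := C1 x hx
      -- Δz bound
      have hΔz : z x k - z c k = 2 * ((x : ℂ) - (c : ℂ)) * u x (k + 1)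
          + γ * (z x (k + 1) - z c (k + 1)) := by
        rw [hz x, hz c]; ring
      have hux : ‖u x (k + 1)‖ ≤ ‖u c (k + 1)‖ + e (k + 1) := by
        calc ‖u x (k + 1)‖
            = ‖u c (k + 1) + (u x (k + 1) - u c (k + 1))‖ := by ring_nf
          _ ≤ ‖u c (k + 1)‖ + ‖u x (k + 1) - u c (k + 1)‖ :=
              norm_add_le _ _
          _ ≤ ‖u c (k + 1)‖ + e (k + 1) := by linarith
      have hzbound : ‖z x k - z c k‖ ≤ f k := by
        rw [hΔz, hf]
        calc ‖2 * ((x : ℂ) - (c : ℂ)) * u x (k + 1)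
              + γ * (z x (k + 1) - z c (k + 1))‖
            ≤ ‖2 * ((x : ℂ) - (c : ℂ)) * u x (k + 1)‖
              + ‖γ * (z x (k + 1) - z c (k + 1))‖ := norm_add_le _ _
          _ = 2 * |x - c| * ‖u x (k + 1)‖
              + ‖z x (k + 1) - z c (k + 1)‖ := by
              rw [norm_mul, norm_mul, norm_mul, habsγ]
              simp [Complex.norm_real, ← Complex.ofReal_sub]
          _ ≤ 2 * r * ‖u c (k + 1)‖ + 2 * r * e (k + 1) + f (k + 1) := by
              nlinarith [norm_nonneg (u x (k + 1)), norm_nonneg (u c (k + 1)),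
                abs_nonneg (x - c), norm_nonneg (u x (k+1) - u c (k+1)),
                hux, hCz, hCu]
      refine ⟨hzbound, ?_⟩
      -- Δu
      have hΔu : u x k - u c k = (z x k - z c k) + (starRingEnd ℂ) γ * (u x (k + 1) - u c (k + 1)) := by
        rw [hu x, hu c]; ring
      have hub1 : ‖u x k - u c k‖ ≤ e (k + 1) + f k := by
        rw [hΔu]
        calc ‖(z x k - z c k) + (starRingEnd ℂ) γ * (u x (k + 1) - u c (k + 1))‖
            ≤ ‖z x k - z c k‖
              + ‖(starRingEnd ℂ) γ‖ * ‖u x (k + 1) - u c (k + 1)‖ := by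
              rw [← norm_mul]; exact norm_add_le _ _
          _ ≤ e (k + 1) + f k := by
              rw [Complex.norm_conj, habsγ]; linarith
      have hΔuim : (u x k - u c k).im = 0 := by simp [Complex.sub_im, A x, A c]
      have hγΔu : γ * (u x k - u c k) = γ * (z x k - z c k) + (u x (k + 1) - u c (k + 1)) := by
        rw [hΔu, mul_add, ← mul_assoc, hγconj]; ring
      have hkey : s * (u x k - u c k).re = (γ * (z x k - z c k)).im := by
        have him := congrArg Complex.im hγΔu
        simp only [Complex.add_im, Complex.mul_im, hγre, hγim, hΔuim,
          Complex.sub_im, Complex.sub_re, A1 x, A1 c] at him ⊢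
        linarith [him]
      have hub2 : ‖u x k - u c k‖ ≤ f k / s := by
        have habsre : ‖u x k - u c k‖ = |(u x k - u c k).re| := by
          rw [Complex.norm_def, Complex.normSq_apply, hΔuim]
          rw [mul_zero, add_zero, Real.sqrt_mul_self_eq_abs]
        rw [habsre, le_div_iff₀ hspos]
        calc |(u x k - u c k).re| * s = |s * (u x k - u c k).re| := by
              rw [abs_mul, abs_of_pos hspos]; ring
          _ = |(γ * (z x k - z c k)).im| := by rw [hkey]
          _ ≤ ‖γ * (z x k - z c k)‖ := Complex.abs_im_le_norm _
          _ = ‖z x k - z c k‖ := by rw [norm_mul, habsγ, one_mul]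
          _ ≤ f k := hzbound
      rw [he]
      exact le_min hub1 hub2
  intro x hx k hk1 hkn
  exact (key (n - k) k hk1 (by omega)).2.2 x hx
end

section
/- Let n ≥ 2, a_0, …, a_n real, a ∈ (−1,1), r ≥ 0, and γ = a + i·√(1−a²). Define for real x the sequences z_n(x) = a_n, u_n(x) = a_n, and for k = n−1 down to 1: z_k(x) = 2(x−a)·u_{k+1}(x) + γ·z_{k+1}(x) + a_k and u_k(x) = z_k(x) + γ̄·u_{k+1}(x). Define e_n = 0, f_n = 0; for k = n−1 down to 1: f_k = 2r·|u_{k+1}(a)| + 2r·e_{k+1} + f_{k+1} and e_k = min(e_{k+1} + f_k, f_k/√(1−a²)); finally f_0 = r·|u_1(a)| + 2r·e_1 + f_1 and e_0 = min(e_1 + f_0, f_0/√(1−a²)). Then for every real x with |x − a| ≤ r, one has |p(x) − p(a)| ≤ e_0, where p(x) = ∑_{i=0}^n a_i T_i(x). -/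
/-!
Because `γ + γ̄ = 2c` and `γγ̄ = 1`, eliminating `z` from the two-step recurrence leaves Clenshaw's
recurrence `u_k = 2x u_{k+1} − u_{k+2} + a_k`: the `u_k(x)` are real and
`p(x) = x u_1(x) − u_2(x) + a_0`. Downward induction then gives `|z_k(x) − z_k(c)| ≤ f_k` by the
triangle inequality and `|γ| = 1`, and `|u_k(x) − u_k(c)| ≤ e_k`; the second term of the minimum
holds because `Δu_k = Δz_k + γ̄ Δu_{k+1}` with `Δu_k`, `Δu_{k+1}` real, so that
`Im γ · |Δu_k| = |Im (γ Δz_k)| ≤ |Δz_k|`. Finally `p(x) − p(c)` is the real part of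
`(x − c) u_1(x) + γ Δz_1`, whose modulus is at most `f_0 ≤ e_0`.
-/

open Polynomial Finset Complex ComplexConjugate

section Clenshaw

variable {R M : Type*} [CommRing R] [AddCommGroup M] [Module R M]

/-- The Clenshaw sequence of `∑ᵢ Tᵢ(x) • aᵢ`, on the indices `1, …, n + 1` only. -/
structure IsClenshawSeq (x : R) (a : ℕ → M) (n : ℕ) (b : ℕ → M) : Prop where
  eq_top : b n = a n
  eq_zero_succ_top : b (n + 1) = 0
  step : ∀ k, 1 ≤ k → k < n → b k = (2 * x) • b (k + 1) - b (k + 2) + a k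

namespace IsClenshawSeq

variable {x : R} {a : ℕ → M} {n : ℕ} {b b' : ℕ → M}

theorem map {N : Type*} [AddCommGroup N] [Module R N] (h : IsClenshawSeq x a n b)
    (f : M →ₗ[R] N) : IsClenshawSeq x (f ∘ a) n (f ∘ b) where
  eq_top := by simp [h.eq_top]
  eq_zero_succ_top := by simp [h.eq_zero_succ_top]
  step k hk hkn := by simp [h.step k hk hkn]

theorem eqOn (h : IsClenshawSeq x a n b) (h' : IsClenshawSeq x a n b') :
    Set.EqOn b b' (Set.Icc 1 n) := by
  rintro k ⟨hk, hkn⟩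
  suffices b k = b' k ∧ b (k + 1) = b' (k + 1) from this.1
  refine Nat.decreasingInduction' (P := fun j => b j = b' j ∧ b (j + 1) = b' (j + 1))
    (fun j hjn hkj ih => ⟨?_, ih.1⟩) hkn
    ⟨h.eq_top.trans h'.eq_top.symm, h.eq_zero_succ_top.trans h'.eq_zero_succ_top.symm⟩
  rw [h.step j (hk.trans hkj) hjn, h'.step j (hk.trans hkj) hjn, ih.1, ih.2]

theorem sum_Icc_chebyshevT (h : IsClenshawSeq x a n b) {k : ℕ} (hk : 1 ≤ k) (hkn : k ≤ n) :
    ∑ i ∈ Icc k n, (Chebyshev.T R i).eval x • a i =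
      (Chebyshev.T R k).eval x • b k - (Chebyshev.T R (k - 1 : ℤ)).eval x • b (k + 1) := by
  refine Nat.decreasingInduction' (fun j hjn hkj ih => ?_) hkn
    (by simp [h.eq_top, h.eq_zero_succ_top])
  have hT := Chebyshev.T_add_two R ((j : ℤ) - 1)
  rw [show (j : ℤ) - 1 + 2 = j + 1 by ring, show (j : ℤ) - 1 + 1 = j by ring] at hT
  rw [← insert_Icc_add_one_left_eq_Icc hjn.le, sum_insert (by simp), ih,
    h.step j (hk.trans hkj) hjn]
  push_cast
  simp only [hT, add_sub_cancel_right, eval_sub, eval_mul, eval_X, eval_ofNat]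
  module

theorem sum_range_chebyshevT (h : IsClenshawSeq x a n b) (hn : 1 ≤ n) :
    ∑ i ∈ range (n + 1), (Chebyshev.T R i).eval x • a i = x • b 1 - b 2 + a 0 := by
  rw [Nat.range_succ_eq_Icc_zero, ← insert_Icc_add_one_left_eq_Icc n.zero_le,
    sum_insert (by simp), zero_add, h.sum_Icc_chebyshevT le_rfl hn]
  simp only [CharP.cast_eq_zero, Chebyshev.T_zero, eval_one, one_smul, Nat.cast_one,
    Chebyshev.T_one, eval_X, sub_self]
  module

end IsClenshawSeq

end Clenshaw

theorem norm_mul_add_mul_le {𝕜 : Type*} [SeminormedRing 𝕜] {t v v₀ γ w : 𝕜} {ρ e f : ℝ}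
    (ht : ‖t‖ ≤ ρ) (hv : ‖v - v₀‖ ≤ e) (hγ : ‖γ‖ ≤ 1) (hw : ‖w‖ ≤ f) :
    ‖t * v + γ * w‖ ≤ ρ * (‖v₀‖ + e) + f := by
  have hv' : ‖v‖ ≤ ‖v₀‖ + e := (norm_le_norm_add_norm_sub' v v₀).trans (by linarith)
  calc ‖t * v + γ * w‖ ≤ ‖t‖ * ‖v‖ + ‖γ‖ * ‖w‖ :=
        (norm_add_le _ _).trans (add_le_add (norm_mul_le _ _) (norm_mul_le _ _))
    _ ≤ ρ * (‖v₀‖ + e) + 1 * f := by gcongr; exact (norm_nonneg _).trans ht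
    _ = ρ * (‖v₀‖ + e) + f := by rw [one_mul]

namespace Complex

theorem norm_ofReal_add_I_mul_sqrt_one_sub_sq {c : ℝ} (hc : c ^ 2 ≤ 1) :
    ‖(c : ℂ) + I * √(1 - c ^ 2)‖ = 1 := by
  rw [norm_eq_sqrt_sq_add_sq]
  simp [Real.sq_sqrt (sub_nonneg.2 hc)]

/-- `γ (ω - γ̄ d) = γ ω - ‖γ‖² d`, whose imaginary part is `Im γ · ω`. -/
theorem abs_im_mul_norm_le {γ ω d : ℂ} (hω : ω.im = 0) (hd : d.im = 0) :
    |γ.im| * ‖ω‖ ≤ ‖γ‖ * ‖ω - conj γ * d‖ := by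
  have him : (γ * (ω - conj γ * d)).im = γ.im * ω.re := by
    rw [mul_sub, ← mul_assoc, mul_conj]
    simp [hω, hd]
  calc |γ.im| * ‖ω‖ = |(γ * (ω - conj γ * d)).im| := by
        rw [him, abs_mul, abs_re_eq_norm.2 hω]
    _ ≤ ‖γ‖ * ‖ω - conj γ * d‖ := (abs_im_le_norm _).trans (norm_mul _ _).le

theorem norm_le_min_of_eq_add_conj_mul {γ ω w d : ℂ} {E f : ℝ} (hω : ω.im = 0) (hd : d.im = 0)
    (hγ : ‖γ‖ ≤ 1) (hγim : 0 < γ.im) (hw : ‖w‖ ≤ f) (hdE : ‖d‖ ≤ E)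
    (h : ω = w + conj γ * d) : ‖ω‖ ≤ min (E + f) (f / γ.im) := by
  refine le_min ?_ ((le_div_iff₀' hγim).2 ?_)
  · have := h ▸ norm_add_le w (conj γ * d)
    rw [norm_mul, norm_conj] at this
    nlinarith [norm_nonneg d, norm_nonneg γ]
  · calc γ.im * ‖ω‖ ≤ ‖γ‖ * ‖w‖ := by
          simpa [abs_of_pos hγim, h] using abs_im_mul_norm_le (γ := γ) hω hd
      _ ≤ f := by nlinarith [norm_nonneg w]

end Complex

/-- Clenshaw's step `u_k = 2x u_{k+1} − u_{k+2} + a_k`, split into two first-order steps through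
the roots `γ`, `γ̄` of `X² − 2cX + 1`. -/
structure IsSplitClenshaw (γ : ℂ) (c x : ℝ) (a : ℕ → ℝ) (n : ℕ) (z u : ℕ → ℂ) : Prop where
  z_top : z n = a n
  u_top : u n = a n
  step : ∀ k, 1 ≤ k → k ≤ n - 1 →
    z k = 2 * ((x : ℂ) - c) * u (k + 1) + γ * z (k + 1) + a k ∧ u k = z k + conj γ * u (k + 1)

namespace IsSplitClenshaw

variable {γ : ℂ} {c x : ℝ} {a : ℕ → ℝ} {n : ℕ} {z u z₀ u₀ : ℕ → ℂ}

/-- The value `u (n + 1)` plays no part in the algorithm; replacing it by `0` makes `u` a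
Clenshaw sequence. -/
theorem eq_sub_conj_mul (h : IsSplitClenshaw γ c x a n z u) {k : ℕ} (hk : 1 ≤ k) (hkn : k ≤ n) :
    z k = Function.update u (n + 1) 0 k - conj γ * Function.update u (n + 1) 0 (k + 1) := by
  rcases hkn.lt_or_eq with hkn | rfl
  · rw [Function.update_of_ne (by omega), Function.update_of_ne (by omega),
      (h.step k hk (by omega)).2]
    ring
  · simp [h.z_top, h.u_top]

theorem isClenshawSeq (h : IsSplitClenshaw γ c x a n z u) (hre : γ.re = c) (hγ : ‖γ‖ = 1) :
    IsClenshawSeq x (fun k => (a k : ℂ)) n (Function.update u (n + 1) 0) := by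
  have hsum : γ + conj γ = 2 * c := by rw [add_conj, hre]; push_cast; ring
  have hprod : γ * conj γ = 1 := by rw [mul_conj', hγ]; simp
  refine ⟨by simp [h.u_top], by simp, fun k hk hkn => ?_⟩
  obtain ⟨hz, hu⟩ := h.step k hk (by omega)
  have hz' := h.eq_sub_conj_mul (k := k + 1) (by omega) hkn
  simp only [Function.update_of_ne (show k ≠ n + 1 by omega),
    Function.update_of_ne (show k + 1 ≠ n + 1 by omega)] at hz' ⊢
  rw [Complex.real_smul, hu, hz, hz']
  push_cast
  linear_combination u (k + 1) * hsum - Function.update u (n + 1) 0 (k + 2) * hprod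

theorem im_eq_zero (h : IsSplitClenshaw γ c x a n z u) (hre : γ.re = c) (hγ : ‖γ‖ = 1) {k : ℕ}
    (hk : 1 ≤ k) (hkn : k ≤ n) : (u k).im = 0 := by
  have hzero : IsClenshawSeq x (imLm ∘ fun k => (a k : ℂ)) n 0 :=
    ⟨by simp, rfl, fun k _ _ => by simp⟩
  simpa [Function.update_of_ne (show k ≠ n + 1 by omega)] using
    ((h.isClenshawSeq hre hγ).map imLm).eqOn hzero ⟨hk, hkn⟩

theorem im_sub_eq_zero (h : IsSplitClenshaw γ c x a n z u) (h₀ : IsSplitClenshaw γ c c a n z₀ u₀)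
    (hre : γ.re = c) (hγ : ‖γ‖ = 1) {k : ℕ} (hk : 1 ≤ k) (hkn : k ≤ n) :
    (u k - u₀ k).im = 0 := by
  rw [sub_im, h.im_eq_zero hre hγ hk hkn, h₀.im_eq_zero hre hγ hk hkn, sub_zero]

theorem sum_chebyshevT (h : IsSplitClenshaw γ c x a n z u) (hre : γ.re = c) (hγ : ‖γ‖ = 1)
    (hn : 1 ≤ n) :
    ∑ i ∈ range (n + 1), a i * (Chebyshev.T ℝ i).eval x =
      x * (u 1).re - (Function.update u (n + 1) 0 2).re + a 0 := by
  simpa [mul_comm, Function.update_of_ne (show 1 ≠ n + 1 by omega)] using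
    ((h.isClenshawSeq hre hγ).map reLm).sum_range_chebyshevT hn

/-- The two sides differ by `(γ - c) (u 1 - u₀ 1)`, which is purely imaginary. -/
theorem sum_chebyshevT_sub_eq_re (h : IsSplitClenshaw γ c x a n z u)
    (h₀ : IsSplitClenshaw γ c c a n z₀ u₀) (hre : γ.re = c) (hγ : ‖γ‖ = 1) (hn : 1 ≤ n) :
    ∑ i ∈ range (n + 1), a i * (Chebyshev.T ℝ i).eval x -
        ∑ i ∈ range (n + 1), a i * (Chebyshev.T ℝ i).eval c =
      ((x - c) * u 1 + γ * (z 1 - z₀ 1)).re := by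
  have hprod : γ * conj γ = 1 := by rw [mul_conj', hγ]; simp
  have hz := h.eq_sub_conj_mul le_rfl hn
  have hz₀ := h₀.eq_sub_conj_mul le_rfl hn
  simp only [Function.update_of_ne (show 1 ≠ n + 1 by omega), Nat.reduceAdd] at hz hz₀
  have hsplit : (x - c) * u 1 + γ * (z 1 - z₀ 1) =
      x * u 1 - c * u₀ 1 - (Function.update u (n + 1) 0 2 - Function.update u₀ (n + 1) 0 2) +
        (γ - c) * (u 1 - u₀ 1) := by
    rw [hz, hz₀]
    linear_combination (Function.update u₀ (n + 1) 0 2 - Function.update u (n + 1) 0 2) * hprod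
  have hreal : ((γ - c) * (u 1 - u₀ 1)).re = 0 := by
    simp [hre, h.im_sub_eq_zero h₀ hre hγ le_rfl hn]
  rw [h.sum_chebyshevT hre hγ hn, h₀.sum_chebyshevT hre hγ hn, hsplit, add_re, hreal]
  simp only [sub_re, re_ofReal_mul]
  ring

theorem norm_sub_le_radius (h : IsSplitClenshaw γ c x a n z u)
    (h₀ : IsSplitClenshaw γ c c a n z₀ u₀) (hre : γ.re = c) (hγ : ‖γ‖ = 1) (hγim : 0 < γ.im)
    {r : ℝ} (hxr : |x - c| ≤ r) {e f : ℕ → ℝ} (hen : e n = 0) (hfn : f n = 0)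
    (href : ∀ k, 1 ≤ k → k ≤ n - 1 →
      f k = 2 * r * ‖u₀ (k + 1)‖ + 2 * r * e (k + 1) + f (k + 1) ∧
      e k = min (e (k + 1) + f k) (f k / γ.im))
    {k : ℕ} (hk : 1 ≤ k) (hkn : k ≤ n) :
    ‖z k - z₀ k‖ ≤ f k ∧ ‖u k - u₀ k‖ ≤ e k := by
  have ht : ‖2 * ((x : ℂ) - c)‖ ≤ 2 * r := by
    rw [norm_mul, Complex.norm_two, ← ofReal_sub, norm_real, Real.norm_eq_abs]
    linarith
  refine Nat.decreasingInduction' (fun j hjn hkj ih => ?_) hkn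
    (by simp [h.z_top, h₀.z_top, h.u_top, h₀.u_top, hen, hfn])
  have hj : 1 ≤ j := hk.trans hkj
  obtain ⟨hz, hu⟩ := h.step j hj (by omega)
  obtain ⟨hz₀, hu₀⟩ := h₀.step j hj (by omega)
  obtain ⟨hf, he⟩ := href j hj (by omega)
  have hzj : ‖z j - z₀ j‖ ≤ f j :=
    calc ‖z j - z₀ j‖ = ‖2 * ((x : ℂ) - c) * u (j + 1) + γ * (z (j + 1) - z₀ (j + 1))‖ := by
          rw [hz, hz₀]; congr 1; ring
      _ ≤ 2 * r * (‖u₀ (j + 1)‖ + e (j + 1)) + f (j + 1) :=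
          norm_mul_add_mul_le ht ih.2 hγ.le ih.1
      _ = f j := by rw [hf]; ring
  exact ⟨hzj, he ▸ norm_le_min_of_eq_add_conj_mul (h.im_sub_eq_zero h₀ hre hγ hj hjn.le)
    (h.im_sub_eq_zero h₀ hre hγ (by omega) hjn) hγ.le hγim hzj ih.2 (by rw [hu, hu₀]; ring)⟩

end IsSplitClenshaw

theorem ball_clenshaw_forward_correct_general (n : ℕ) (hn : 2 ≤ n) (a : ℕ → ℝ)
    (c : ℝ) (hc : c ∈ Set.Ioo (-1 : ℝ) 1) (r : ℝ) (γ : ℂ)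
    (hγ : γ = (c : ℂ) + Complex.I * Real.sqrt (1 - c ^ 2))
    (z u : ℝ → ℕ → ℂ)
    (hzn : ∀ x, z x n = (a n : ℂ)) (hun : ∀ x, u x n = (a n : ℂ))
    (hrec : ∀ x, ∀ k, 1 ≤ k → k ≤ n - 1 →
      z x k = 2 * ((x : ℂ) - (c : ℂ)) * u x (k + 1) + γ * z x (k + 1) + (a k : ℂ) ∧
      u x k = z x k + (starRingEnd ℂ) γ * u x (k + 1))
    (e f : ℕ → ℝ) (hen : e n = 0) (hfn : f n = 0)
    (href : ∀ k, 1 ≤ k → k ≤ n - 1 →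
      f k = 2 * r * ‖u c (k + 1)‖ + 2 * r * e (k + 1) + f (k + 1) ∧
      e k = min (e (k + 1) + f k) (f k / Real.sqrt (1 - c ^ 2)))
    (hf0 : f 0 = r * ‖u c 1‖ + 2 * r * e 1 + f 1)
    (he0 : e 0 = min (e 1 + f 0) (f 0 / Real.sqrt (1 - c ^ 2))) :
    ∀ x : ℝ, |x - c| ≤ r →
      |(∑ i ∈ Finset.range (n + 1), a i * (Polynomial.Chebyshev.T ℝ i).eval x) -
        (∑ i ∈ Finset.range (n + 1), a i * (Polynomial.Chebyshev.T ℝ i).eval c)| ≤ e 0 := by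
  intro x hxr
  have hre : γ.re = c := by simp [hγ]
  have hγim : γ.im = √(1 - c ^ 2) := by simp [hγ]
  have hγpos : 0 < γ.im := hγim ▸ Real.sqrt_pos.2 (by nlinarith [hc.1, hc.2])
  have hγnorm : ‖γ‖ = 1 := hγ ▸ norm_ofReal_add_I_mul_sqrt_one_sub_sq (by nlinarith [hc.1, hc.2])
  rw [← hγim] at href he0
  have hrun : ∀ y, IsSplitClenshaw γ c y a n (z y) (u y) := fun y => ⟨hzn y, hun y, hrec y⟩
  obtain ⟨hz₁, hu₁⟩ :=
    (hrun x).norm_sub_le_radius (hrun c) hre hγnorm hγpos hxr hen hfn href le_rfl (by omega)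
  have hw := norm_mul_add_mul_le (t := (x : ℂ) - c) (ρ := r)
    (by rwa [← ofReal_sub, norm_real, Real.norm_eq_abs]) hu₁ hγnorm.le hz₁
  have hf₀ : r * (‖u c 1‖ + e 1) + f 1 ≤ f 0 := by
    rw [hf0]
    nlinarith [(abs_nonneg _).trans hxr, (norm_nonneg _).trans hu₁]
  have hf₀_nonneg : 0 ≤ f 0 := (norm_nonneg _).trans (hw.trans hf₀)
  rw [(hrun x).sum_chebyshevT_sub_eq_re (hrun c) hre hγnorm (by omega)]
  calc _ ≤ _ := abs_re_le_norm _
    _ ≤ f 0 := hw.trans hf₀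
    _ ≤ e 0 := he0 ▸ le_min (by linarith [(norm_nonneg _).trans hu₁])
        ((le_div_iff₀ hγpos).2 (by nlinarith [im_le_norm γ]))

/-- The ball Clenshaw algorithm (forward error analysis): the final radius `e₀`
bounds `|p(x) − p(a)|` on the interval `[a-r, a+r]`. -/
theorem ball_clenshaw_forward_correct (n : ℕ) (hn : 2 ≤ n) (a : ℕ → ℝ)
    (c : ℝ) (hc : c ∈ Set.Ioo (-1 : ℝ) 1) (r : ℝ) (hr : 0 ≤ r) (γ : ℂ)
    (hγ : γ = (c : ℂ) + Complex.I * Real.sqrt (1 - c ^ 2))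
    (z u : ℝ → ℕ → ℂ)
    (hzn : ∀ x, z x n = (a n : ℂ)) (hun : ∀ x, u x n = (a n : ℂ))
    (hrec : ∀ x, ∀ k, 1 ≤ k → k ≤ n - 1 →
      z x k = 2 * ((x : ℂ) - (c : ℂ)) * u x (k + 1) + γ * z x (k + 1) + (a k : ℂ) ∧
      u x k = z x k + (starRingEnd ℂ) γ * u x (k + 1))
    (e f : ℕ → ℝ) (hen : e n = 0) (hfn : f n = 0)
    (href : ∀ k, 1 ≤ k → k ≤ n - 1 →
      f k = 2 * r * ‖u c (k + 1)‖ + 2 * r * e (k + 1) + f (k + 1) ∧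
      e k = min (e (k + 1) + f k) (f k / Real.sqrt (1 - c ^ 2)))
    (hf0 : f 0 = r * ‖u c 1‖ + 2 * r * e 1 + f 1)
    (he0 : e 0 = min (e 1 + f 0) (f 0 / Real.sqrt (1 - c ^ 2))) :
    ∀ x : ℝ, |x - c| ≤ r →
      |(∑ i ∈ Finset.range (n + 1), a i * (Polynomial.Chebyshev.T ℝ i).eval x) -
        (∑ i ∈ Finset.range (n + 1), a i * (Polynomial.Chebyshev.T ℝ i).eval c)| ≤ e 0 :=
  ball_clenshaw_forward_correct_general n hn a c hc r γ hγ z u hzn hun hrec e f hen hfn href hf0 he0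
end

section
/- Let n ≥ 2, a_0, …, a_n real, a ∈ (−1,1), r > 0 with 2rn² ≤ 1, and suppose n < 1/(2·√(1−a²)). Let u_k(a) be the Clenshaw sequence of p at a (u_{n+1}(a)=0, u_n(a)=a_n, u_k(a)=2a·u_{k+1}(a)−u_{k+2}(a)+a_k for 1 ≤ k ≤ n−1), and let M > 0 satisfy |u_k(a)| ≤ M for 1 ≤ k ≤ n. Define e_n = 0, f_n = 0; for k = n−1 down to 1: f_k = 2r·|u_{k+1}(a)| + 2r·e_{k+1} + f_{k+1} and e_k = min(e_{k+1} + f_k, f_k/√(1−a²)); finally f_0 = r·|u_1(a)| + 2r·e_1 + f_1 and e_0 = min(e_1 + f_0, f_0/√(1−a²)). Then e_0 ≤ 2Mn²r. -/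
/-!
Only the first branch `e_k ≤ e_{k+1} + f_k` of each `min` is needed. With `ρ = 2rM` the radii
obey `f_k ≤ ρ + 2r e_{k+1} + f_{k+1}` and `e_k ≤ e_{k+1} + f_k`, the step to `k = 0` included
(as `r|u₁| ≤ ρ`). Since `2r ≤ 1/n²`, the coupling term `2r e_{k+1}` only contributes at order
`m³/n²`, where `m = n - k`; so induction on `m` keeps `f_k ≤ ρ (m + m³/4n²)` and
`e_k ≤ ρ ((m² + m)/2 + m⁴/4n²)`. At `m = n` the latter is `ρ (3n²/4 + n/2) ≤ ρ n²` for `n ≥ 2`.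
-/

namespace BallClenshaw

noncomputable def fMajorant (N m : ℝ) : ℝ := m + m ^ 3 / (4 * N)

noncomputable def eMajorant (N m : ℝ) : ℝ := (m ^ 2 + m) / 2 + m ^ 4 / (4 * N)

lemma eMajorant_le_of_sq_le {N m : ℝ} (hm : 0 ≤ m) (hmN : m ^ 2 ≤ N) :
    eMajorant N m ≤ (3 * m ^ 2 + 2 * m) / 4 := by
  have : m ^ 4 / (4 * N) ≤ m ^ 2 / 4 := by
    rcases hm.eq_or_lt with rfl | hm
    · simp
    have hN : 0 < N := by nlinarith
    rw [div_le_div_iff₀ (by positivity) (by norm_num)]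
    nlinarith [sq_nonneg m]
  unfold eMajorant
  linarith

lemma eMajorant_self_le_sq {n : ℝ} (hn : 2 ≤ n) : eMajorant (n ^ 2) n ≤ n ^ 2 := by
  have : n ^ 4 / (4 * n ^ 2) = n ^ 2 / 4 := by field_simp
  rw [eMajorant, this]
  nlinarith

lemma one_add_add_fMajorant_le_fMajorant_succ {N m : ℝ} (hN : 0 ≤ N) (hm : 0 ≤ m) :
    1 + (3 * m ^ 2 + 2 * m) / (4 * N) + fMajorant N m ≤ fMajorant N (m + 1) := by
  have : (3 * m ^ 2 + 2 * m) / (4 * N) + m ^ 3 / (4 * N) ≤ (m + 1) ^ 3 / (4 * N) := by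
    rw [← add_div]
    gcongr
    nlinarith
  unfold fMajorant
  linarith

lemma eMajorant_add_fMajorant_succ_le {N m : ℝ} (hN : 0 ≤ N) (hm : 0 ≤ m) :
    eMajorant N m + fMajorant N (m + 1) ≤ eMajorant N (m + 1) := by
  have : m ^ 4 / (4 * N) + (m + 1) ^ 3 / (4 * N) ≤ (m + 1) ^ 4 / (4 * N) := by
    rw [← add_div]
    gcongr
    nlinarith [pow_nonneg hm 3]
  unfold eMajorant fMajorant
  linarith

lemma le_majorants_succ {N δ ρ m e f e' f' : ℝ} (hδ : 0 ≤ δ) (hδN : δ * N ≤ 1)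
    (hρ : 0 ≤ ρ) (hm : 0 ≤ m) (hmN : (m + 1) ^ 2 ≤ N)
    (he : e ≤ ρ * eMajorant N m) (hf : f ≤ ρ * fMajorant N m)
    (hf' : f' ≤ ρ + δ * e + f) (he' : e' ≤ e + f') :
    e' ≤ ρ * eMajorant N (m + 1) ∧ f' ≤ ρ * fMajorant N (m + 1) := by
  have hN : 0 < N := by nlinarith
  have hcoupling : δ * e ≤ ρ * ((3 * m ^ 2 + 2 * m) / (4 * N)) :=
    calc δ * e ≤ δ * (ρ * eMajorant N m) := mul_le_mul_of_nonneg_left he hδ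
      _ ≤ N⁻¹ * (ρ * ((3 * m ^ 2 + 2 * m) / 4)) := by
          gcongr
          · unfold eMajorant; positivity
          · rw [← one_div, le_div_iff₀ hN]; exact hδN
          · exact eMajorant_le_of_sq_le hm (by nlinarith)
      _ = ρ * ((3 * m ^ 2 + 2 * m) / (4 * N)) := by field_simp
  have hf'_le : f' ≤ ρ * fMajorant N (m + 1) :=
    calc f' ≤ ρ + ρ * ((3 * m ^ 2 + 2 * m) / (4 * N)) + ρ * fMajorant N m := by linarith
      _ = ρ * (1 + (3 * m ^ 2 + 2 * m) / (4 * N) + fMajorant N m) := by ring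
      _ ≤ ρ * fMajorant N (m + 1) := by
          gcongr; exact one_add_add_fMajorant_le_fMajorant_succ hN.le hm
  refine ⟨?_, hf'_le⟩
  calc e' ≤ ρ * eMajorant N m + ρ * fMajorant N (m + 1) := by linarith
    _ = ρ * (eMajorant N m + fMajorant N (m + 1)) := by ring
    _ ≤ ρ * eMajorant N (m + 1) := by
        gcongr; exact eMajorant_add_fMajorant_succ_le hN.le hm

theorem le_majorants_of_step {n : ℕ} {δ ρ : ℝ} {e f : ℕ → ℝ} (hδ : 0 ≤ δ)
    (hδn : δ * (n : ℝ) ^ 2 ≤ 1) (hρ : 0 ≤ ρ) (hen : e n = 0) (hfn : f n = 0)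
    (hstep : ∀ k < n, f k ≤ ρ + δ * e (k + 1) + f (k + 1) ∧ e k ≤ e (k + 1) + f k) :
    ∀ m ≤ n, e (n - m) ≤ ρ * eMajorant ((n : ℝ) ^ 2) m ∧
      f (n - m) ≤ ρ * fMajorant ((n : ℝ) ^ 2) m := by
  intro m
  induction m with
  | zero => simp [hen, hfn, eMajorant, fMajorant]
  | succ m ih =>
    intro hmn
    have hk : n - (m + 1) + 1 = n - m := by omega
    obtain ⟨hf', he'⟩ := hstep (n - (m + 1)) (by omega)
    rw [hk] at hf' he'
    obtain ⟨he, hf⟩ := ih (by omega)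
    push_cast
    exact le_majorants_succ hδ hδn hρ m.cast_nonneg (by gcongr; exact_mod_cast hmn) he hf hf' he'

end BallClenshaw

open BallClenshaw in
theorem ball_clenshaw_forward_radius_small_n_general (n : ℕ) (hn : 2 ≤ n)
    (c : ℝ) (r : ℝ) (hr : 0 < r)
    (hrn : 2 * r * (n : ℝ) ^ 2 ≤ 1)
    (u : ℕ → ℝ)
    (M : ℝ) (hM : 0 < M) (hMu : ∀ k, 1 ≤ k → k ≤ n → |u k| ≤ M)
    (e f : ℕ → ℝ) (hen : e n = 0) (hfn : f n = 0)
    (href : ∀ k, 1 ≤ k → k ≤ n - 1 →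
      f k = 2 * r * |u (k + 1)| + 2 * r * e (k + 1) + f (k + 1) ∧
      e k = min (e (k + 1) + f k) (f k / Real.sqrt (1 - c ^ 2)))
    (hf0 : f 0 = r * |u 1| + 2 * r * e 1 + f 1)
    (he0 : e 0 = min (e 1 + f 0) (f 0 / Real.sqrt (1 - c ^ 2))) :
    e 0 ≤ 2 * M * (n : ℝ) ^ 2 * r := by
  have hstep : ∀ k < n, f k ≤ 2 * r * M + 2 * r * e (k + 1) + f (k + 1) ∧
      e k ≤ e (k + 1) + f k := by
    intro k hk
    have hu : |u (k + 1)| ≤ M := hMu (k + 1) (by omega) (by omega)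
    rcases Nat.eq_zero_or_pos k with rfl | hk1
    · rw [he0, hf0]
      exact ⟨by nlinarith, min_le_left _ _⟩
    · obtain ⟨hfk, hek⟩ := href k hk1 (by omega)
      rw [hek, hfk]
      exact ⟨by nlinarith, min_le_left _ _⟩
  have he := (le_majorants_of_step (by positivity) hrn (by positivity) hen hfn hstep n le_rfl).1
  rw [Nat.sub_self] at he
  calc e 0 ≤ 2 * r * M * eMajorant ((n : ℝ) ^ 2) n := he
    _ ≤ 2 * r * M * (n : ℝ) ^ 2 := by
        gcongr
        exact eMajorant_self_le_sq (by exact_mod_cast hn)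
    _ = 2 * M * (n : ℝ) ^ 2 * r := by ring

/-- Radius bound for the ball Clenshaw algorithm (forward error, exact arithmetic),
case `n < 1/(2√(1-a²))`: the final radius satisfies `e₀ ≤ 2Mn²r`. -/
theorem ball_clenshaw_forward_radius_small_n (n : ℕ) (hn : 2 ≤ n) (a : ℕ → ℝ)
    (c : ℝ) (hc : c ∈ Set.Ioo (-1 : ℝ) 1) (r : ℝ) (hr : 0 < r)
    (hrn : 2 * r * (n : ℝ) ^ 2 ≤ 1)
    (hncase : (n : ℝ) < 1 / (2 * Real.sqrt (1 - c ^ 2)))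
    (u : ℕ → ℝ) (hun1 : u (n + 1) = 0) (hun : u n = a n)
    (hurec : ∀ k, 1 ≤ k → k ≤ n - 1 → u k = 2 * c * u (k + 1) - u (k + 2) + a k)
    (M : ℝ) (hM : 0 < M) (hMu : ∀ k, 1 ≤ k → k ≤ n → |u k| ≤ M)
    (e f : ℕ → ℝ) (hen : e n = 0) (hfn : f n = 0)
    (href : ∀ k, 1 ≤ k → k ≤ n - 1 →
      f k = 2 * r * |u (k + 1)| + 2 * r * e (k + 1) + f (k + 1) ∧
      e k = min (e (k + 1) + f k) (f k / Real.sqrt (1 - c ^ 2)))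
    (hf0 : f 0 = r * |u 1| + 2 * r * e 1 + f 1)
    (he0 : e 0 = min (e 1 + f 0) (f 0 / Real.sqrt (1 - c ^ 2))) :
    e 0 ≤ 2 * M * (n : ℝ) ^ 2 * r :=
  ball_clenshaw_forward_radius_small_n_general n hn c r hr hrn u M hM hMu e f hen hfn href hf0 he0
end

section
/- Let n ≥ 2, a_0, …, a_n real, a ∈ (−1,1), 0 < r ≤ 1/2, and suppose n > √(1−a²)/(2r). Let u_k(a) be the Clenshaw sequence of p at a, and let M > 0 satisfy |u_k(a)| ≤ M for 1 ≤ k ≤ n. Define e_n = 0, f_n = 0; for k = n−1 down to 1: f_k = 2r·|u_{k+1}(a)| + 2r·e_{k+1} + f_{k+1} and e_k = min(e_{k+1} + f_k, f_k/√(1−a²)); finally f_0 = r·|u_1(a)| + 2r·e_1 + f_1 and e_0 = min(e_1 + f_0, f_0/√(1−a²)). Then e_0 ≤ 2M·[(1 + 2r/√(1−a²))^n − 1]. -/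
/-!
Only the second branch of each `min` is needed: `e k ≤ f k / s` with `s = √(1 - c²)`.
Writing `q = 1 + 2r/s`, the identity `s q = s + 2r` makes `f k ≤ M s (q^(n-k) - 1)`
propagate down the recurrence for `f`, and the final step, whose first coefficient is
`r` instead of `2r`, is dominated by a generic step. Hence `e₀ ≤ f₀ / s ≤ M (qⁿ - 1)`.
-/

section ClenshawRadius

variable {n : ℕ} {r s M : ℝ} {u e f : ℕ → ℝ}

lemma mul_growth_pow_succ_sub_one (hs : s ≠ 0) (M : ℝ) (j : ℕ) :
    M * s * ((1 + 2 * r / s) ^ (j + 1) - 1) =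
      2 * r * M + 2 * r * (M * ((1 + 2 * r / s) ^ j - 1)) +
        M * s * ((1 + 2 * r / s) ^ j - 1) := by
  have hsq : s * (1 + 2 * r / s) = s + 2 * r := by field_simp
  rw [pow_succ]
  linear_combination M * (1 + 2 * r / s) ^ j * hsq

lemma div_le_of_le_mul (hs : 0 < s) {x y : ℝ} (h : x ≤ M * s * y) : x / s ≤ M * y := by
  rw [div_le_iff₀ hs]
  linarith

lemma radius_step_le (hr : 0 ≤ r) (hs : 0 < s) {j : ℕ} {x e' f' : ℝ} (hx : |x| ≤ M)
    (hf : f' ≤ M * s * ((1 + 2 * r / s) ^ j - 1)) (he : e' ≤ f' / s) :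
    2 * r * |x| + 2 * r * e' + f' ≤ M * s * ((1 + 2 * r / s) ^ (j + 1) - 1) := by
  have he' : e' ≤ M * ((1 + 2 * r / s) ^ j - 1) := he.trans (div_le_of_le_mul hs hf)
  rw [mul_growth_pow_succ_sub_one hs.ne']
  gcongr

lemma radius_le_of_backward_recurrence (hr : 0 ≤ r) (hs : 0 < s)
    (hMu : ∀ k, 1 ≤ k → k ≤ n → |u k| ≤ M) (hen : e n = 0) (hfn : f n = 0)
    (hf : ∀ k, 1 ≤ k → k < n → f k = 2 * r * |u (k + 1)| + 2 * r * e (k + 1) + f (k + 1))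
    (he : ∀ k, 1 ≤ k → k < n → e k ≤ f k / s) :
    ∀ k, 1 ≤ k → k ≤ n → f k ≤ M * s * ((1 + 2 * r / s) ^ (n - k) - 1) ∧ e k ≤ f k / s := by
  suffices ∀ j, ∀ k, 1 ≤ k → k + j = n →
      f k ≤ M * s * ((1 + 2 * r / s) ^ j - 1) ∧ e k ≤ f k / s from
    fun k hk hkn => this (n - k) k hk (by omega)
  intro j
  induction j with
  | zero =>
    intro k _ hkn
    obtain rfl : k = n := hkn
    simp [hen, hfn]
  | succ j ih =>
    intro k hk hkn
    obtain ⟨ihf, ihe⟩ := ih (k + 1) (by omega) (by omega)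
    refine ⟨?_, he k hk (by omega)⟩
    rw [hf k hk (by omega)]
    exact radius_step_le hr hs (hMu (k + 1) (by omega) (by omega)) ihf ihe

end ClenshawRadius

theorem ball_clenshaw_forward_radius_large_n_general (n : ℕ) (hn : 2 ≤ n)
    (c : ℝ) (hc : c ∈ Set.Ioo (-1 : ℝ) 1) (r : ℝ) (hr : 0 < r)
    (u : ℕ → ℝ)
    (M : ℝ) (hMu : ∀ k, 1 ≤ k → k ≤ n → |u k| ≤ M)
    (e f : ℕ → ℝ) (hen : e n = 0) (hfn : f n = 0)
    (href : ∀ k, 1 ≤ k → k ≤ n - 1 →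
      f k = 2 * r * |u (k + 1)| + 2 * r * e (k + 1) + f (k + 1) ∧
      e k = min (e (k + 1) + f k) (f k / Real.sqrt (1 - c ^ 2)))
    (hf0 : f 0 = r * |u 1| + 2 * r * e 1 + f 1)
    (he0 : e 0 = min (e 1 + f 0) (f 0 / Real.sqrt (1 - c ^ 2))) :
    e 0 ≤ 2 * M * ((1 + 2 * r / Real.sqrt (1 - c ^ 2)) ^ n - 1) := by
  set s := Real.sqrt (1 - c ^ 2)
  have hs : 0 < s := Real.sqrt_pos.mpr (by nlinarith [hc.1, hc.2])
  have hu1 : |u 1| ≤ M := hMu 1 le_rfl (by omega)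
  obtain ⟨hf1, he1⟩ := radius_le_of_backward_recurrence hr.le hs hMu hen hfn
    (fun k hk hkn => (href k hk (by omega)).1)
    (fun k hk hkn => (href k hk (by omega)).2 ▸ min_le_right _ _) 1 le_rfl (by omega)
  have hf0_le : f 0 ≤ M * s * ((1 + 2 * r / s) ^ n - 1) := by
    have hstep := radius_step_le hr.le hs hu1 hf1 he1
    rw [Nat.sub_add_cancel (by omega : 1 ≤ n)] at hstep
    calc f 0 ≤ 2 * r * |u 1| + 2 * r * e 1 + f 1 := by
          rw [hf0]; gcongr; linarith
      _ ≤ _ := hstep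
  have hgrowth : 0 ≤ M * ((1 + 2 * r / s) ^ n - 1) :=
    mul_nonneg ((abs_nonneg _).trans hu1)
      (sub_nonneg.mpr (one_le_pow₀ (by linarith [div_pos (mul_pos two_pos hr) hs])))
  calc e 0 ≤ f 0 / s := he0 ▸ min_le_right _ _
    _ ≤ M * ((1 + 2 * r / s) ^ n - 1) := div_le_of_le_mul hs hf0_le
    _ ≤ 2 * M * ((1 + 2 * r / s) ^ n - 1) := by linarith

/-- Radius bound for the ball Clenshaw algorithm (forward error, exact arithmetic),
case `n > √(1-a²)/(2r)`: the final radius satisfies `e₀ ≤ 2M[(1+2r/√(1-a²))ⁿ − 1]`. -/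
theorem ball_clenshaw_forward_radius_large_n (n : ℕ) (hn : 2 ≤ n) (a : ℕ → ℝ)
    (c : ℝ) (hc : c ∈ Set.Ioo (-1 : ℝ) 1) (r : ℝ) (hr : 0 < r)
    (hr2 : r ≤ 1 / 2)
    (hncase : Real.sqrt (1 - c ^ 2) / (2 * r) < (n : ℝ))
    (u : ℕ → ℝ) (hun1 : u (n + 1) = 0) (hun : u n = a n)
    (hurec : ∀ k, 1 ≤ k → k ≤ n - 1 → u k = 2 * c * u (k + 1) - u (k + 2) + a k)
    (M : ℝ) (hM : 0 < M) (hMu : ∀ k, 1 ≤ k → k ≤ n → |u k| ≤ M)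
    (e f : ℕ → ℝ) (hen : e n = 0) (hfn : f n = 0)
    (href : ∀ k, 1 ≤ k → k ≤ n - 1 →
      f k = 2 * r * |u (k + 1)| + 2 * r * e (k + 1) + f (k + 1) ∧
      e k = min (e (k + 1) + f k) (f k / Real.sqrt (1 - c ^ 2)))
    (hf0 : f 0 = r * |u 1| + 2 * r * e 1 + f 1)
    (he0 : e 0 = min (e 1 + f 0) (f 0 / Real.sqrt (1 - c ^ 2))) :
    e 0 ≤ 2 * M * ((1 + 2 * r / Real.sqrt (1 - c ^ 2)) ^ n - 1) :=
  ball_clenshaw_forward_radius_large_n_general n hn c hc r hr u M hMu e f hen hfn href hf0 he0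
end

section
/- Let n ≥ 2, a_0, …, a_n real, a ∈ (−1,1), r > 0 with 2rn² ≤ 1. Let u_k(a) be the Clenshaw sequence of p at a, and let M > 0 satisfy |u_k(a)| ≤ M for 1 ≤ k ≤ n. Define e_n = 0, f_n = 0, and for k = n−1 down to 1: f_k = 2r·|u_{k+1}(a)| + 2r·e_{k+1} + f_{k+1} and e_k = min(e_{k+1} + f_k, f_k/√(1−a²)). Then for all k with 1 ≤ k ≤ n−1: f_k ≤ 2Mr·(2(n−k) − 1) and e_k ≤ 2M(n−k)²·r. -/
/-!
Write `x = n - k`. Inductively `fₖ ≤ 2Mr(2x - 1)` and `eₖ ≤ 2Mx²r`: the new contribution to `f` is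
`2r|uₖ₊₁| + 2r eₖ₊₁ ≤ 2Mr + 4M r² (x - 1)²`, and `2r(x - 1)² ≤ 2rn² ≤ 1` turns the quadratic term into
`2Mr`, so `f` grows by at most `4Mr` per step; then `eₖ ≤ eₖ₊₁ + fₖ` sums these linear bounds to the
quadratic one.
-/

section ClenshawRadius

variable {M r x u e f : ℝ}

theorem clenshawRadius_bounds_first_step (hr : 0 ≤ r) (hu : |u| ≤ M) (hf : f = 2 * r * |u|)
    (he : e ≤ f) :
    f ≤ 2 * M * r * (2 * 1 - 1) ∧ e ≤ 2 * M * 1 ^ 2 * r := by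
  have : f ≤ 2 * r * M := hf ▸ mul_le_mul_of_nonneg_left hu (by positivity)
  constructor <;> linarith

theorem clenshawRadius_bounds_step {e' f' : ℝ} (hM : 0 ≤ M) (hr : 0 ≤ r) (hrx : 2 * r * x ^ 2 ≤ 1)
    (hu : |u| ≤ M) (he' : e' ≤ 2 * M * x ^ 2 * r) (hf' : f' ≤ 2 * M * r * (2 * x - 1))
    (hf : f = 2 * r * |u| + 2 * r * e' + f') (he : e ≤ e' + f) :
    f ≤ 2 * M * r * (2 * (x + 1) - 1) ∧ e ≤ 2 * M * (x + 1) ^ 2 * r := by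
  have hru : 2 * r * |u| ≤ 2 * r * M := mul_le_mul_of_nonneg_left hu (by positivity)
  have hre : 2 * r * e' ≤ 2 * r * (2 * M * x ^ 2 * r) := mul_le_mul_of_nonneg_left he' (by positivity)
  have hquad : 2 * M * r * (2 * r * x ^ 2) ≤ 2 * M * r * 1 :=
    mul_le_mul_of_nonneg_left hrx (by positivity)
  have hfk : f ≤ 2 * M * r * (2 * (x + 1) - 1) := by
    rw [hf]; linarith
  exact ⟨hfk, by linarith⟩

end ClenshawRadius

theorem ball_clenshaw_forward_intermediate_bounds_small_general (n : ℕ)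
    (c : ℝ) (r : ℝ) (hr : 0 < r)
    (hrn : 2 * r * (n : ℝ) ^ 2 ≤ 1)
    (u : ℕ → ℝ)
    (M : ℝ) (hM : 0 < M) (hMu : ∀ k, 1 ≤ k → k ≤ n → |u k| ≤ M)
    (e f : ℕ → ℝ) (hen : e n = 0) (hfn : f n = 0)
    (href : ∀ k, 1 ≤ k → k ≤ n - 1 →
      f k = 2 * r * |u (k + 1)| + 2 * r * e (k + 1) + f (k + 1) ∧
      e k = min (e (k + 1) + f k) (f k / Real.sqrt (1 - c ^ 2))) :
    ∀ k, 1 ≤ k → k ≤ n - 1 →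
      f k ≤ 2 * M * r * (2 * ((n : ℝ) - (k : ℝ)) - 1) ∧
      e k ≤ 2 * M * ((n : ℝ) - (k : ℝ)) ^ 2 * r := by
  intro k hk hkn
  induction hkn using Nat.decreasingInduction with
  | self =>
    obtain ⟨hf, he⟩ := href (n - 1) hk le_rfl
    rw [Nat.sub_add_cancel (by omega), hen, hfn, mul_zero, add_zero, add_zero] at hf
    rw [Nat.sub_add_cancel (by omega), hen, zero_add] at he
    have hdist : (n : ℝ) - ((n - 1 : ℕ) : ℝ) = 1 := by push_cast [show 1 ≤ n by omega]; ring
    rw [hdist]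
    exact clenshawRadius_bounds_first_step hr.le (hMu n (by omega) le_rfl) hf (he ▸ min_le_left _ _)
  | of_succ k _ ih =>
    obtain ⟨hf, he⟩ := href k hk (by omega)
    have hdist : (n : ℝ) - (k : ℝ) = ((n : ℝ) - ((k + 1 : ℕ) : ℝ)) + 1 := by push_cast; ring
    have hx : 0 ≤ (n : ℝ) - ((k + 1 : ℕ) : ℝ) := sub_nonneg.2 (by exact_mod_cast (by omega : k + 1 ≤ n))
    have hrx : 2 * r * ((n : ℝ) - ((k + 1 : ℕ) : ℝ)) ^ 2 ≤ 1 :=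
      le_trans (by gcongr; linarith [(k + 1 : ℕ).cast_nonneg (α := ℝ)]) hrn
    obtain ⟨ihf, ihe⟩ := ih (by omega)
    rw [hdist]
    exact clenshawRadius_bounds_step hM.le hr.le hrx (hMu (k + 1) (by omega) (by omega)) ihe ihf hf
      (he ▸ min_le_left _ _)

/-- Intermediate bounds in the forward error analysis of the ball Clenshaw
algorithm, case `2rn² ≤ 1`: `fₖ ≤ 2Mr(2(n−k)−1)` and `eₖ ≤ 2M(n−k)²r`. -/
theorem ball_clenshaw_forward_intermediate_bounds_small (n : ℕ) (hn : 2 ≤ n) (a : ℕ → ℝ)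
    (c : ℝ) (hc : c ∈ Set.Ioo (-1 : ℝ) 1) (r : ℝ) (hr : 0 < r)
    (hrn : 2 * r * (n : ℝ) ^ 2 ≤ 1)
    (u : ℕ → ℝ) (hun1 : u (n + 1) = 0) (hun : u n = a n)
    (hurec : ∀ k, 1 ≤ k → k ≤ n - 1 → u k = 2 * c * u (k + 1) - u (k + 2) + a k)
    (M : ℝ) (hM : 0 < M) (hMu : ∀ k, 1 ≤ k → k ≤ n → |u k| ≤ M)
    (e f : ℕ → ℝ) (hen : e n = 0) (hfn : f n = 0)
    (href : ∀ k, 1 ≤ k → k ≤ n - 1 →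
      f k = 2 * r * |u (k + 1)| + 2 * r * e (k + 1) + f (k + 1) ∧
      e k = min (e (k + 1) + f k) (f k / Real.sqrt (1 - c ^ 2))) :
    ∀ k, 1 ≤ k → k ≤ n - 1 →
      f k ≤ 2 * M * r * (2 * ((n : ℝ) - (k : ℝ)) - 1) ∧
      e k ≤ 2 * M * ((n : ℝ) - (k : ℝ)) ^ 2 * r :=
  ball_clenshaw_forward_intermediate_bounds_small_general n c r hr hrn u M hM hMu e f hen hfn href
end

section
/- Let n ≥ 2, a_0, …, a_n real, a ∈ (−1,1), 0 < r ≤ 1/2. Let u_k(a) be the Clenshaw sequence of p at a, and let M > 0 satisfy |u_k(a)| ≤ M for 1 ≤ k ≤ n. Define e_n = 0, f_n = 0, and for k = n−1 down to 1: f_k = 2r·|u_{k+1}(a)| + 2r·e_{k+1} + f_{k+1} and e_k = min(e_{k+1} + f_k, f_k/√(1−a²)). Then for all k with 1 ≤ k ≤ n: f_k ≤ (3/2)·M·√(1−a²)·[(1 + 2r/√(1−a²))^n − 1]. -/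
/-!
Write `s = √(1 - c²)` and `t = 1 + 2r/s`. The `min` defining `eₖ` gives `eₖ ≤ fₖ / s`, so the
recurrence for `fₖ` becomes the linear inequality `fₖ ≤ 2rM + t fₖ₊₁`. Unrolling it from `fₙ = 0`
gives `fₖ ≤ 2rM (1 + t + ⋯ + t^(n-k-1)) ≤ 2rM (1 + t + ⋯ + t^(n-1)) = M s (tⁿ - 1)`,
since `2r = s (t - 1)`.
-/

open Finset

theorem le_mul_geom_sum_of_le_add_mul {x : ℕ → ℝ} {b t : ℝ} {m n : ℕ} (ht : 0 ≤ t)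
    (hstep : ∀ k, m ≤ k → k < n → x k ≤ b + t * x (k + 1)) (hlast : x n ≤ 0) :
    ∀ k, m ≤ k → k ≤ n → x k ≤ b * ∑ i ∈ range (n - k), t ^ i := by
  intro k hmk hkn
  refine Nat.decreasingInduction' (P := fun j ↦ x j ≤ b * ∑ i ∈ range (n - j), t ^ i)
    (fun j hjn hkj ih ↦ ?_) hkn (by simpa using hlast)
  have hsucc : n - j = n - (j + 1) + 1 := by omega
  calc x j ≤ b + t * x (j + 1) := hstep j (hmk.trans hkj) hjn
    _ ≤ b + t * (b * ∑ i ∈ range (n - (j + 1)), t ^ i) := by gcongr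
    _ = b * ∑ i ∈ range (n - j), t ^ i := by rw [hsucc, geom_sum_succ]; ring

theorem mul_geom_sum_one_add_div {s : ℝ} (hs : s ≠ 0) (b : ℝ) (n : ℕ) :
    b * ∑ i ∈ range n, (1 + b / s) ^ i = s * ((1 + b / s) ^ n - 1) := by
  rw [← geom_sum_mul, add_sub_cancel_left]
  field_simp

theorem ball_clenshaw_forward_intermediate_bound_f_general (n : ℕ)
    (c : ℝ) (hc : c ∈ Set.Ioo (-1 : ℝ) 1) (r : ℝ) (hr : 0 < r)
    (u : ℕ → ℝ)
    (M : ℝ) (hMu : ∀ k, 1 ≤ k → k ≤ n → |u k| ≤ M)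
    (e f : ℕ → ℝ) (hen : e n = 0) (hfn : f n = 0)
    (href : ∀ k, 1 ≤ k → k ≤ n - 1 →
      f k = 2 * r * |u (k + 1)| + 2 * r * e (k + 1) + f (k + 1) ∧
      e k = min (e (k + 1) + f k) (f k / Real.sqrt (1 - c ^ 2))) :
    ∀ k, 1 ≤ k → k ≤ n →
      f k ≤ (3 / 2) * M * Real.sqrt (1 - c ^ 2) *
        ((1 + 2 * r / Real.sqrt (1 - c ^ 2)) ^ n - 1) := by
  set s := Real.sqrt (1 - c ^ 2)
  have hs : 0 < s := Real.sqrt_pos.mpr (by nlinarith [hc.1, hc.2])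
  set t := 1 + 2 * r / s
  have ht : 1 ≤ t := le_add_of_nonneg_right (by positivity)
  have he : ∀ k, 1 ≤ k → k ≤ n → e k ≤ f k / s := by
    intro k hk hkn
    rcases hkn.eq_or_lt with rfl | hlt
    · simp [hen, hfn]
    · exact (href k hk (by omega)).2 ▸ min_le_right _ _
  have hstep : ∀ k, 1 ≤ k → k < n → f k ≤ 2 * r * M + t * f (k + 1) := by
    intro k hk hkn
    rw [(href k hk (by omega)).1]
    have hu := hMu (k + 1) (by omega) hkn
    have he' := he (k + 1) (by omega) hkn
    calc 2 * r * |u (k + 1)| + 2 * r * e (k + 1) + f (k + 1)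
        ≤ 2 * r * M + 2 * r * (f (k + 1) / s) + f (k + 1) := by gcongr
      _ = 2 * r * M + t * f (k + 1) := by ring
  intro k hk hkn
  have hM : 0 ≤ M := (abs_nonneg _).trans (hMu k hk hkn)
  have hgeom : 0 ≤ t ^ n - 1 := sub_nonneg.mpr (one_le_pow₀ ht)
  calc f k ≤ 2 * r * M * ∑ i ∈ range (n - k), t ^ i :=
        le_mul_geom_sum_of_le_add_mul (by linarith) hstep hfn.le k hk hkn
    _ ≤ 2 * r * M * ∑ i ∈ range n, t ^ i := by
        gcongr
        omega
    _ = M * s * (t ^ n - 1) := by rw [mul_right_comm, mul_geom_sum_one_add_div hs.ne']; ring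
    _ ≤ (3 / 2) * M * s * (t ^ n - 1) := by gcongr; linarith

/-- Intermediate bound in the forward error analysis of the ball Clenshaw
algorithm: `fₖ ≤ (3/2)M√(1-a²)[(1+2r/√(1-a²))ⁿ − 1]`. -/
theorem ball_clenshaw_forward_intermediate_bound_f (n : ℕ) (hn : 2 ≤ n) (a : ℕ → ℝ)
    (c : ℝ) (hc : c ∈ Set.Ioo (-1 : ℝ) 1) (r : ℝ) (hr : 0 < r) (hr2 : r ≤ 1 / 2)
    (u : ℕ → ℝ) (hun1 : u (n + 1) = 0) (hun : u n = a n)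
    (hurec : ∀ k, 1 ≤ k → k ≤ n - 1 → u k = 2 * c * u (k + 1) - u (k + 2) + a k)
    (M : ℝ) (hM : 0 < M) (hMu : ∀ k, 1 ≤ k → k ≤ n → |u k| ≤ M)
    (e f : ℕ → ℝ) (hen : e n = 0) (hfn : f n = 0)
    (href : ∀ k, 1 ≤ k → k ≤ n - 1 →
      f k = 2 * r * |u (k + 1)| + 2 * r * e (k + 1) + f (k + 1) ∧
      e k = min (e (k + 1) + f k) (f k / Real.sqrt (1 - c ^ 2))) :
    ∀ k, 1 ≤ k → k ≤ n →
      f k ≤ (3 / 2) * M * Real.sqrt (1 - c ^ 2) *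
        ((1 + 2 * r / Real.sqrt (1 - c ^ 2)) ^ n - 1) :=
  ball_clenshaw_forward_intermediate_bound_f_general n c hc r hr u M hMu e f hen hfn href
end

section
/- Let n ≥ 1 and let a_0, …, a_n be real numbers. For a real number x̃ let u_k(x̃) be the Clenshaw sequence: u_{n+1}(x̃) = 0, u_n(x̃) = a_n, u_k(x̃) = 2x̃·u_{k+1}(x̃) − u_{k+2}(x̃) + a_k for 1 ≤ k ≤ n−1. Then for all real x and x̃, with γ = x̃ − x: p(x̃) − p(x) = 2γ·∑_{i=1}^n u_i(x̃)·T_{i−1}(x) − γ·u_1(x̃), where p(x) = ∑_{i=0}^n a_i T_i(x). (Elliott's backward-error identity for the Clenshaw algorithm.) -/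
/-!
Read the Clenshaw recurrence backwards as `a k = u k - 2 x̃ u (k + 1) + u (k + 2)`. Since
`T (k + 1) + T (k - 1) = 2 x T k`, each term `a k * T k (x)` is a difference of consecutive boundary
terms `u k * T k (x) - u (k + 1) * T (k - 1) (x)` plus the defect `2 (x - x̃) u (k + 1) T k (x)`.
Summing telescopes, the defect vanishes at `x = x̃`, and the constant coefficient `a 0` cancels
from the difference.
-/

open Polynomial Finset Polynomial.Chebyshev

section Clenshaw

variable {R : Type*} [CommRing R]

noncomputable def clenshawBoundary (w : ℕ → R) (y : R) (k : ℕ) : R :=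
  w k * (T R k).eval y - w (k + 1) * (T R ((k : ℤ) - 1)).eval y

theorem clenshaw_term_eq (w : ℕ → R) (xt y : R) (k : ℕ) :
    (w k - 2 * xt * w (k + 1) + w (k + 2)) * (T R k).eval y =
      clenshawBoundary w y k - clenshawBoundary w y (k + 1) +
        2 * (y - xt) * (w (k + 1) * (T R k).eval y) := by
  have hT : (T R ((k : ℤ) + 1)).eval y =
      2 * y * (T R k).eval y - (T R ((k : ℤ) - 1)).eval y := by
    simp [T_add_one]
  simp only [clenshawBoundary, Nat.cast_add, Nat.cast_one, add_sub_cancel_right, hT]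
  ring

theorem sum_range_clenshaw (w : ℕ → R) (xt y : R) (N : ℕ) :
    ∑ k ∈ range N, (w k - 2 * xt * w (k + 1) + w (k + 2)) * (T R k).eval y =
      clenshawBoundary w y 0 - clenshawBoundary w y N +
        2 * (y - xt) * ∑ k ∈ range N, w (k + 1) * (T R k).eval y := by
  simp only [clenshaw_term_eq, sum_add_distrib, sum_range_sub', mul_sum]

theorem sum_range_clenshaw_sub {w : ℕ → R} {N : ℕ} (hN : w N = 0) (hN1 : w (N + 1) = 0)
    (xt y : R) :
    ∑ k ∈ range N, (w k - 2 * xt * w (k + 1) + w (k + 2)) * (T R k).eval xt -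
      ∑ k ∈ range N, (w k - 2 * xt * w (k + 1) + w (k + 2)) * (T R k).eval y =
      (xt - y) * (2 * ∑ k ∈ range N, w (k + 1) * (T R k).eval y - w 1) := by
  have hB : ∀ z, clenshawBoundary w z N = 0 := by simp [clenshawBoundary, hN, hN1]
  rw [sum_range_clenshaw, sum_range_clenshaw, hB, hB]
  simp [clenshawBoundary]
  ring

theorem sum_range_mul_T_sub_congr {a b : ℕ → R} {N : ℕ}
    (h : ∀ k, 1 ≤ k → k < N → a k = b k) (y z : R) :
    ∑ k ∈ range N, a k * (T R k).eval y - ∑ k ∈ range N, a k * (T R k).eval z =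
      ∑ k ∈ range N, b k * (T R k).eval y - ∑ k ∈ range N, b k * (T R k).eval z := by
  simp only [← sum_sub_distrib, ← mul_sub]
  refine sum_congr rfl fun k hk => ?_
  rcases Nat.eq_zero_or_pos k with rfl | hk0
  · simp [T_zero]
  · rw [h k hk0 (mem_range.mp hk)]

end Clenshaw

theorem elliott_identity_general (n : ℕ) (a : ℕ → ℝ) (xt : ℝ) (u : ℕ → ℝ)
    (hun1 : u (n + 1) = 0) (hun : u n = a n)
    (hurec : ∀ k, 1 ≤ k → k ≤ n - 1 → u k = 2 * xt * u (k + 1) - u (k + 2) + a k) :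
    ∀ x : ℝ,
      (∑ i ∈ Finset.range (n + 1), a i * (Polynomial.Chebyshev.T ℝ i).eval xt) -
      (∑ i ∈ Finset.range (n + 1), a i * (Polynomial.Chebyshev.T ℝ i).eval x) =
      2 * (xt - x) * (∑ i ∈ Finset.Icc 1 n,
        u i * (Polynomial.Chebyshev.T ℝ ((i : ℤ) - 1)).eval x) - (xt - x) * u 1 := by
  intro x
  -- `u (n + 2)` is unconstrained: the recurrence at `k = n` needs it to be `0`.
  let w : ℕ → ℝ := fun k => if k ≤ n + 1 then u k else 0
  have hwu : ∀ k ≤ n + 1, w k = u k := fun k hk => if_pos hk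
  have hrec : ∀ k, 1 ≤ k → k < n + 1 → a k = w k - 2 * xt * w (k + 1) + w (k + 2) := by
    intro k hk1 hk2
    rcases Nat.lt_succ_iff_lt_or_eq.mp hk2 with hkn | rfl
    · rw [hwu k (by omega), hwu (k + 1) (by omega), hwu (k + 2) (by omega),
        hurec k hk1 (by omega)]
      ring
    · simp [w, hun, hun1]
  have hsum : ∑ k ∈ range (n + 1), w (k + 1) * (T ℝ k).eval x =
      ∑ i ∈ Icc 1 n, u i * (T ℝ ((i : ℤ) - 1)).eval x := by
    rw [sum_range_succ, hwu _ le_rfl, hun1, zero_mul, add_zero, ← Ico_add_one_right_eq_Icc,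
      sum_Ico_eq_sum_range, Nat.add_sub_cancel]
    refine sum_congr rfl fun k hk => ?_
    rw [hwu _ (by simp at hk; omega)]
    push_cast
    ring_nf
  rw [sum_range_mul_T_sub_congr hrec, sum_range_clenshaw_sub (by simpa [hwu] using hun1)
    (by simp [w]), hsum, hwu 1 (by omega)]
  ring

/-- Elliott's backward-error identity for the Clenshaw algorithm:
`p(x̃) − p(x) = 2γ·∑_{i=1}^n uᵢ(x̃)·T_{i−1}(x) − γ·u₁(x̃)` where `γ = x̃ − x`. -/
theorem elliott_identity (n : ℕ) (hn : 1 ≤ n) (a : ℕ → ℝ) (xt : ℝ) (u : ℕ → ℝ)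
    (hun1 : u (n + 1) = 0) (hun : u n = a n)
    (hurec : ∀ k, 1 ≤ k → k ≤ n - 1 → u k = 2 * xt * u (k + 1) - u (k + 2) + a k) :
    ∀ x : ℝ,
      (∑ i ∈ Finset.range (n + 1), a i * (Polynomial.Chebyshev.T ℝ i).eval xt) -
      (∑ i ∈ Finset.range (n + 1), a i * (Polynomial.Chebyshev.T ℝ i).eval x) =
      2 * (xt - x) * (∑ i ∈ Finset.Icc 1 n,
        u i * (Polynomial.Chebyshev.T ℝ ((i : ℤ) - 1)).eval x) - (xt - x) * u 1 :=
  elliott_identity_general n a xt u hun1 hun hurec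
end

section
/- Let n ≥ 1, let a_0, …, a_n be real numbers, let a ∈ [−1,1] and r ≥ 0. Let u_k(a) be the Clenshaw sequence of p at a: u_{n+1}(a) = 0, u_n(a) = a_n, u_k(a) = 2a·u_{k+1}(a) − u_{k+2}(a) + a_k for 1 ≤ k ≤ n−1. Define e_n = 0, e_k = 2r·|u_{k+1}(a)| + e_{k+1} for n−1 ≥ k ≥ 1, and e_0 = r·|u_1(a)| + e_1. Then for every x ∈ [−1,1] with |x − a| ≤ r, one has |p(x) − p(a)| ≤ e_0; equivalently |p(x) − p(a)| ≤ r·|u_1(a)| + 2r·∑_{i=2}^n |u_i(a)|. -/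
/-!
Unrolling Clenshaw's recurrence against the three-term recurrence `T_{k+1} = 2y T_k - T_{k-1}`
telescopes the Chebyshev sum into
`p(y) = a₀ + u₁ y - u₂ + 2 (y - c) ∑_{k ≥ 2} u_k T_{k-1}(y)`.
At `y = c` the last term vanishes, so `p(x) - p(c) = (x - c) (u₁ + 2 ∑_{k ≥ 2} u_k T_{k-1}(x))`,
and `|T_{k-1}(x)| ≤ 1` on `[-1, 1]` bounds this by `r |u₁| + 2 r ∑_{k ≥ 2} |u_k|`, which is the
closed form of `e₀`.
-/

open Polynomial Finset

theorem Nat.eq_sum_Icc_of_eq_add_succ {M : Type*} [AddCommMonoid M] (e f : ℕ → M) {m n : ℕ}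
    (hmn : m ≤ n) (hen : e n = 0)
    (herec : ∀ k, m ≤ k → k < n → e k = f (k + 1) + e (k + 1)) :
    e m = ∑ k ∈ Icc (m + 1) n, f k := by
  induction hmn using Nat.decreasingInduction with
  | self => simp [hen]
  | of_succ m hm ih =>
    rw [herec m le_rfl hm, ih fun k hk hkn => herec k (by omega) hkn,
      ← insert_Icc_add_one_left_eq_Icc (by omega : m + 1 ≤ n), sum_insert (by simp)]

namespace Polynomial.Chebyshev

variable {R : Type*} [CommRing R]

theorem sum_Icc_mul_eval_T_eq_clenshaw (a u : ℕ → R) (c y : R) {m n : ℕ} (hmn : m ≤ n)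
    (hun1 : u (n + 1) = 0) (hun : u n = a n)
    (hurec : ∀ k, m ≤ k → k < n → u k = 2 * c * u (k + 1) - u (k + 2) + a k) :
    ∑ i ∈ Icc m n, a i * (T R i).eval y =
      u m * (T R m).eval y - u (m + 1) * (T R (m - 1 : ℤ)).eval y +
        2 * (y - c) * ∑ k ∈ Icc (m + 1) n, u k * (T R (k - 1 : ℤ)).eval y := by
  induction hmn using Nat.decreasingInduction with
  | self => simp [hun, hun1]
  | of_succ m hm ih =>
    have ha : a m = u m - 2 * c * u (m + 1) + u (m + 2) := by
      linear_combination -hurec m le_rfl hm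
    have hT : (T R (m + 1 : ℕ)).eval y = 2 * y * (T R m).eval y - (T R (m - 1 : ℤ)).eval y := by
      simp [T_add_one, mul_assoc]
    rw [← insert_Icc_add_one_left_eq_Icc hm.le, sum_insert (by simp),
      ih fun k hk hkn => hurec k (by omega) hkn,
      ← insert_Icc_add_one_left_eq_Icc (by omega : m + 1 ≤ n), sum_insert (by simp), ha, hT]
    push_cast [add_sub_cancel_right]
    ring

theorem sum_range_mul_eval_T_sub_eq (a u : ℕ → R) (c x : R) {n : ℕ} (hn : 1 ≤ n)
    (hun1 : u (n + 1) = 0) (hun : u n = a n)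
    (hurec : ∀ k, 1 ≤ k → k < n → u k = 2 * c * u (k + 1) - u (k + 2) + a k) :
    ∑ i ∈ range (n + 1), a i * (T R i).eval x - ∑ i ∈ range (n + 1), a i * (T R i).eval c =
      (x - c) * (u 1 + 2 * ∑ k ∈ Icc 2 n, u k * (T R (k - 1 : ℤ)).eval x) := by
  have hsum (y : R) : ∑ i ∈ range (n + 1), a i * (T R i).eval y =
      a 0 + u 1 * y - u 2 + 2 * (y - c) * ∑ k ∈ Icc 2 n, u k * (T R (k - 1 : ℤ)).eval y := by
    rw [range_eq_Ico, ← insert_Ico_add_one_left_eq_Ico (by omega), Ico_add_one_right_eq_Icc,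
      sum_insert (by simp), zero_add, sum_Icc_mul_eval_T_eq_clenshaw a u c y hn hun1 hun hurec]
    norm_num
    ring
  rw [hsum x, hsum c]
  ring

theorem abs_sum_mul_eval_T_le {ι : Type*} (s : Finset ι) (u : ι → ℝ) (d : ι → ℤ)
    {x : ℝ} (hx : |x| ≤ 1) : |∑ i ∈ s, u i * (T ℝ (d i)).eval x| ≤ ∑ i ∈ s, |u i| := by
  refine (abs_sum_le_sum_abs _ _).trans (sum_le_sum fun i _ => ?_)
  rw [abs_mul]
  exact mul_le_of_le_one_right (abs_nonneg _) (abs_eval_T_real_le_one _ hx)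

end Polynomial.Chebyshev

theorem ball_clenshaw_backward_correct_general (n : ℕ) (hn : 1 ≤ n) (a : ℕ → ℝ)
    (c : ℝ) (r : ℝ) (u : ℕ → ℝ) (hun1 : u (n + 1) = 0) (hun : u n = a n)
    (hurec : ∀ k, 1 ≤ k → k ≤ n - 1 → u k = 2 * c * u (k + 1) - u (k + 2) + a k)
    (e : ℕ → ℝ) (hen : e n = 0)
    (herec : ∀ k, 1 ≤ k → k ≤ n - 1 → e k = 2 * r * |u (k + 1)| + e (k + 1))
    (he0 : e 0 = r * |u 1| + e 1) :
    ∀ x : ℝ, x ∈ Set.Icc (-1 : ℝ) 1 → |x - c| ≤ r →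
      |(∑ i ∈ Finset.range (n + 1), a i * (Polynomial.Chebyshev.T ℝ i).eval x) -
        (∑ i ∈ Finset.range (n + 1), a i * (Polynomial.Chebyshev.T ℝ i).eval c)| ≤ e 0 ∧
      |(∑ i ∈ Finset.range (n + 1), a i * (Polynomial.Chebyshev.T ℝ i).eval x) -
        (∑ i ∈ Finset.range (n + 1), a i * (Polynomial.Chebyshev.T ℝ i).eval c)| ≤
        r * |u 1| + 2 * r * ∑ i ∈ Finset.Icc 2 n, |u i| := by
  intro x hx hxc
  have he : e 0 = r * |u 1| + 2 * r * ∑ i ∈ Icc 2 n, |u i| := by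
    rw [he0, mul_sum, Nat.eq_sum_Icc_of_eq_add_succ e (fun k => 2 * r * |u k|) hn hen
      fun k hk hkn => herec k hk (by omega)]
  have hbound : |∑ i ∈ range (n + 1), a i * (Chebyshev.T ℝ i).eval x -
      ∑ i ∈ range (n + 1), a i * (Chebyshev.T ℝ i).eval c| ≤
        r * |u 1| + 2 * r * ∑ i ∈ Icc 2 n, |u i| := by
    rw [Chebyshev.sum_range_mul_eval_T_sub_eq a u c x hn hun1 hun
      fun k hk hkn => hurec k hk (by omega), abs_mul]
    calc |x - c| * |u 1 + 2 * ∑ k ∈ Icc 2 n, u k * (Chebyshev.T ℝ (k - 1 : ℤ)).eval x|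
        ≤ r * (|u 1| + 2 * ∑ i ∈ Icc 2 n, |u i|) := by
          gcongr
          · exact (abs_nonneg _).trans hxc
          · refine (abs_add_le _ _).trans ?_
            rw [abs_mul, abs_two]
            gcongr
            exact Chebyshev.abs_sum_mul_eval_T_le _ u (fun k => (k : ℤ) - 1) (abs_le.mpr hx)
      _ = r * |u 1| + 2 * r * ∑ i ∈ Icc 2 n, |u i| := by ring
  exact ⟨he ▸ hbound, hbound⟩

/-- Backward error analysis of the Clenshaw algorithm: the radius `e₀` computed
from `eₙ = 0`, `eₖ = 2r|u_{k+1}(a)| + e_{k+1}`, `e₀ = r|u₁(a)| + e₁` bounds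
`|p(x) − p(a)|` for `x ∈ [−1,1]` with `|x − a| ≤ r`. -/
theorem ball_clenshaw_backward_correct (n : ℕ) (hn : 1 ≤ n) (a : ℕ → ℝ)
    (c : ℝ) (hc : c ∈ Set.Icc (-1 : ℝ) 1) (r : ℝ) (hr : 0 ≤ r)
    (u : ℕ → ℝ) (hun1 : u (n + 1) = 0) (hun : u n = a n)
    (hurec : ∀ k, 1 ≤ k → k ≤ n - 1 → u k = 2 * c * u (k + 1) - u (k + 2) + a k)
    (e : ℕ → ℝ) (hen : e n = 0)
    (herec : ∀ k, 1 ≤ k → k ≤ n - 1 → e k = 2 * r * |u (k + 1)| + e (k + 1))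
    (he0 : e 0 = r * |u 1| + e 1) :
    ∀ x : ℝ, x ∈ Set.Icc (-1 : ℝ) 1 → |x - c| ≤ r →
      |(∑ i ∈ Finset.range (n + 1), a i * (Polynomial.Chebyshev.T ℝ i).eval x) -
        (∑ i ∈ Finset.range (n + 1), a i * (Polynomial.Chebyshev.T ℝ i).eval c)| ≤ e 0 ∧
      |(∑ i ∈ Finset.range (n + 1), a i * (Polynomial.Chebyshev.T ℝ i).eval x) -
        (∑ i ∈ Finset.range (n + 1), a i * (Polynomial.Chebyshev.T ℝ i).eval c)| ≤
        r * |u 1| + 2 * r * ∑ i ∈ Finset.Icc 2 n, |u i| :=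
  ball_clenshaw_backward_correct_general n hn a c r u hun1 hun hurec e hen herec he0
end

section
/- Let n ≥ 1, let a_0, …, a_n be real numbers, let a ∈ [−1,1], r > 0 and M > 0. Let u_k(a) be the Clenshaw sequence of p at a and suppose |u_k(a)| ≤ M for 1 ≤ k ≤ n. Let ε_0, …, ε_{n−1} be real numbers with 0 ≤ ε_k < M·r for all k. Define e_n = 0, e_k = e_{k+1} + 2r·|u_{k+1}(a)| + ε_k for n−1 ≥ k ≥ 1, and e_0 = e_1 + r·|u_1(a)| + ε_0. Then e_0 < 3Mnr. -/
/-! Unrolling the recursion writes `e₁` as a sum of `n - 1` increments `2r|uₖ₊₁| + εₖ`, each at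
most `3Mr`; the last step adds `r|u₁| + ε₀ < 2Mr`, which leaves a margin of `Mr > 0`. -/

open Finset

theorem eq_add_sum_Ico_of_eq_add {G : Type*} [AddCommGroup G] {e d : ℕ → G} {m n : ℕ}
    (hmn : m ≤ n) (h : ∀ k ∈ Ico m n, e k = e (k + 1) + d k) :
    e m = e n + ∑ k ∈ Ico m n, d k := by
  have hd : ∀ k ∈ Ico m n, d k = -(e (k + 1) - e k) := fun k hk => by
    rw [h k hk]; abel
  rw [sum_congr rfl hd, sum_neg_distrib, sum_Ico_sub e hmn]
  abel

theorem ball_clenshaw_backward_radius_general (n : ℕ) (hn : 1 ≤ n)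
    (r : ℝ) (hr : 0 < r)
    (M : ℝ) (hM : 0 < M)
    (u : ℕ → ℝ)
    (hMu : ∀ k, 1 ≤ k → k ≤ n → |u k| ≤ M)
    (ε : ℕ → ℝ) (hε : ∀ k, k ≤ n - 1 → 0 ≤ ε k ∧ ε k < M * r)
    (e : ℕ → ℝ) (hen : e n = 0)
    (herec : ∀ k, 1 ≤ k → k ≤ n - 1 → e k = e (k + 1) + 2 * r * |u (k + 1)| + ε k)
    (he0 : e 0 = e 1 + r * |u 1| + ε 0) :
    e 0 < 3 * M * (n : ℝ) * r := by
  have step_le : ∀ k ∈ Ico 1 n, 2 * r * |u (k + 1)| + ε k ≤ 3 * M * r := fun k hk => by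
    obtain ⟨hk1, hkn⟩ := mem_Ico.mp hk
    have hu := mul_le_mul_of_nonneg_left (hMu (k + 1) (by omega) hkn) hr.le
    linarith [(hε k (by omega)).2]
  have he1 : e 1 ≤ (n - 1) * (3 * M * r) :=
    calc e 1 = ∑ k ∈ Ico 1 n, (2 * r * |u (k + 1)| + ε k) := by
          rw [eq_add_sum_Ico_of_eq_add (e := e) hn fun k hk => ?_, hen, zero_add]
          obtain ⟨hk1, hkn⟩ := mem_Ico.mp hk
          rw [herec k hk1 (by omega), add_assoc]
      _ ≤ ∑ _k ∈ Ico 1 n, 3 * M * r := sum_le_sum step_le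
      _ = (n - 1) * (3 * M * r) := by simp [Nat.cast_sub hn]
  have hu1 := mul_le_mul_of_nonneg_left (hMu 1 le_rfl hn) hr.le
  have hMr := mul_pos hM hr
  linarith [(hε 0 (Nat.zero_le _)).2]

/-- Radius bound for the ball Clenshaw algorithm with backward error analysis:
if `|uₖ(a)| ≤ M` and each rounding error bound satisfies `0 ≤ εₖ < Mr`,
then the final radius satisfies `e₀ < 3Mnr`. -/
theorem ball_clenshaw_backward_radius (n : ℕ) (hn : 1 ≤ n) (a : ℕ → ℝ)
    (c : ℝ) (hc : c ∈ Set.Icc (-1 : ℝ) 1) (r : ℝ) (hr : 0 < r)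
    (M : ℝ) (hM : 0 < M)
    (u : ℕ → ℝ) (hun1 : u (n + 1) = 0) (hun : u n = a n)
    (hurec : ∀ k, 1 ≤ k → k ≤ n - 1 → u k = 2 * c * u (k + 1) - u (k + 2) + a k)
    (hMu : ∀ k, 1 ≤ k → k ≤ n → |u k| ≤ M)
    (ε : ℕ → ℝ) (hε : ∀ k, k ≤ n - 1 → 0 ≤ ε k ∧ ε k < M * r)
    (e : ℕ → ℝ) (hen : e n = 0)
    (herec : ∀ k, 1 ≤ k → k ≤ n - 1 → e k = e (k + 1) + 2 * r * |u (k + 1)| + ε k)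
    (he0 : e 0 = e 1 + r * |u 1| + ε 0) :
    e 0 < 3 * M * (n : ℝ) * r :=
  ball_clenshaw_backward_radius_general n hn r hr M hM u hMu ε hε e hen herec he0
end

section
/- Let 0 < ε ≤ 1/4 and let n ≥ 2. Model the interval-arithmetic Clenshaw evaluation on X = [1/2 − ε, 1/2 + ε] of the polynomial with Chebyshev coefficients a_n = 1 and a_i = 0 for i < n by the sets U_{n+1} = {0}, U_n = {1}, and U_k = { 2·x·u − v : x ∈ X, u ∈ U_{k+1}, v ∈ U_{k+2} } for k = n−1 down to 1. Then for every k with 1 ≤ k ≤ n−1, the width of U_{n−k} is at least 4ε·F_k, where F_k is the k-th Fibonacci number (F_1 = F_2 = 1); i.e. sSup U_{n−k} − sInf U_{n−k} ≥ 4ε·F_k. In particular the width of the interval computed by the interval Clenshaw algorithm grows exponentially in n. -/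
/-!
Each `U k` is compact, being a continuous image of `X × U (k+1) × U (k+2)`, so its supremum and
infimum are attained. Choosing `x = 1/2` together with extreme elements `u, v` shows that the width
of `U k` is at least the sum of the widths of `U (k+1)` and `U (k+2)`: a Fibonacci recurrence. It
starts from `width (U n) = 0` and `width (U (n-1)) ≥ 4ε`, the latter from `x = 1/2 ± ε`, `u = 1`.
-/

open Set

lemma mul_fib_le_of_add_le {w : ℕ → ℝ} {c : ℝ} {N : ℕ} (h₀ : 0 ≤ w 0) (h₁ : 1 ≤ N → c ≤ w 1)
    (hrec : ∀ k, k + 2 ≤ N → w (k + 1) + w k ≤ w (k + 2)) :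
    ∀ k ≤ N, c * Nat.fib k ≤ w k := by
  intro k
  induction k using Nat.twoStepInduction with
  | zero => simpa using h₀
  | one => simpa using h₁
  | more k ih₀ ih₁ =>
    intro hk
    have h := hrec k hk
    rw [Nat.fib_add_two, Nat.cast_add, mul_add]
    linarith [ih₀ (by omega), ih₁ (by omega)]

namespace IntervalClenshaw

noncomputable def width (S : Set ℝ) : ℝ := sSup S - sInf S

def clenshawSet (ε : ℝ) (S T : Set ℝ) : Set ℝ :=
  {w : ℝ | ∃ x ∈ Icc (1 / 2 - ε) (1 / 2 + ε), ∃ u ∈ S, ∃ v ∈ T, w = 2 * x * u - v}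

lemma sub_le_width {D : Set ℝ} (hD : IsCompact D) {a b : ℝ} (ha : a ∈ D) (hb : b ∈ D) :
    a - b ≤ width D :=
  sub_le_sub (le_csSup hD.bddAbove ha) (csInf_le hD.bddBelow hb)

variable {ε : ℝ} {S T : Set ℝ}

lemma clenshawSet_eq_image :
    clenshawSet ε S T =
      (fun p : ℝ × ℝ × ℝ => 2 * p.1 * p.2.1 - p.2.2) '' Icc (1 / 2 - ε) (1 / 2 + ε) ×ˢ S ×ˢ T := by
  ext w
  simp only [clenshawSet, mem_ofPred_eq, mem_image, mem_prod, Prod.exists]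
  constructor
  · rintro ⟨x, hx, u, hu, v, hv, rfl⟩
    exact ⟨x, u, v, ⟨hx, hu, hv⟩, rfl⟩
  · rintro ⟨x, u, v, ⟨hx, hu, hv⟩, rfl⟩
    exact ⟨x, hx, u, hu, v, hv, rfl⟩

lemma isCompact_clenshawSet (hS : IsCompact S) (hT : IsCompact T) :
    IsCompact (clenshawSet ε S T) := by
  rw [clenshawSet_eq_image]
  exact (isCompact_Icc.prod (hS.prod hT)).image (by fun_prop)

lemma mem_clenshawSet {x u v : ℝ} (hx : x ∈ Icc (1 / 2 - ε) (1 / 2 + ε)) (hu : u ∈ S)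
    (hv : v ∈ T) : 2 * x * u - v ∈ clenshawSet ε S T :=
  ⟨x, hx, u, hu, v, hv, rfl⟩

lemma sub_mem_clenshawSet (hε : 0 ≤ ε) {u v : ℝ} (hu : u ∈ S) (hv : v ∈ T) :
    u - v ∈ clenshawSet ε S T := by
  simpa using mem_clenshawSet (x := 1 / 2) ⟨by linarith, by linarith⟩ hu hv

lemma clenshawSet_nonempty (hε : 0 ≤ ε) (hS : S.Nonempty) (hT : T.Nonempty) :
    (clenshawSet ε S T).Nonempty := by
  obtain ⟨u, hu⟩ := hS
  obtain ⟨v, hv⟩ := hT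
  exact ⟨u - v, sub_mem_clenshawSet hε hu hv⟩

lemma mul_le_width_clenshawSet (hε : 0 ≤ ε) (hS : IsCompact S) (hT : IsCompact T)
    {u v : ℝ} (hu : u ∈ S) (hv : v ∈ T) : 4 * ε * u ≤ width (clenshawSet ε S T) := by
  have hhi := mem_clenshawSet (ε := ε) (x := 1 / 2 + ε) ⟨by linarith, le_rfl⟩ hu hv
  have hlo := mem_clenshawSet (ε := ε) (x := 1 / 2 - ε) ⟨le_rfl, by linarith⟩ hu hv
  calc 4 * ε * u = (2 * (1 / 2 + ε) * u - v) - (2 * (1 / 2 - ε) * u - v) := by ring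
    _ ≤ _ := sub_le_width (isCompact_clenshawSet hS hT) hhi hlo

lemma width_add_width_le_width_clenshawSet (hε : 0 ≤ ε) (hS : IsCompact S) (hT : IsCompact T)
    (hS' : S.Nonempty) (hT' : T.Nonempty) :
    width S + width T ≤ width (clenshawSet ε S T) := by
  calc width S + width T = (sSup S - sInf T) - (sInf S - sSup T) := by unfold width; ring
    _ ≤ _ := sub_le_width (isCompact_clenshawSet hS hT)
      (sub_mem_clenshawSet hε (hS.sSup_mem hS') (hT.sInf_mem hT'))
      (sub_mem_clenshawSet hε (hS.sInf_mem hS') (hT.sSup_mem hT'))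

section Recurrence

variable {U : ℕ → Set ℝ} {n : ℕ}
  (hrec : ∀ k, 1 ≤ k → k ≤ n - 1 → U k = clenshawSet ε (U (k + 1)) (U (k + 2)))
include hrec

lemma eq_clenshawSet_of_rec {k : ℕ} (hk : k + 1 ≤ n - 1) :
    U (n - (k + 1)) = clenshawSet ε (U (n - k)) (U (n + 1 - k)) := by
  rw [hrec _ (by omega) (by omega), show n - (k + 1) + 1 = n - k by omega,
    show n - (k + 1) + 2 = n + 1 - k by omega]

lemma clenshawSet_induction {P : Set ℝ → Prop} (h₀ : P (U (n + 1))) (h₁ : P (U n))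
    (hstep : ∀ S T, P S → P T → P (clenshawSet ε S T)) :
    ∀ k ≤ n - 1, P (U (n - k)) := by
  suffices ∀ k ≤ n - 1, P (U (n - k)) ∧ P (U (n + 1 - k)) from fun k hk => (this k hk).1
  intro k
  induction k with
  | zero => exact fun _ => ⟨h₁, h₀⟩
  | succ k ih =>
    intro hk
    obtain ⟨hPk, hPk'⟩ := ih (by omega)
    rw [eq_clenshawSet_of_rec hrec hk, show n + 1 - (k + 1) = n - k by omega]
    exact ⟨hstep _ _ hPk hPk', hPk⟩

end Recurrence

end IntervalClenshaw

theorem interval_clenshaw_exponential_growth_general (ε : ℝ) (hε₁ : 0 < ε)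
    (n : ℕ) (U : ℕ → Set ℝ)
    (hUn1 : U (n + 1) = {0}) (hUn : U n = {1})
    (hUrec : ∀ k, 1 ≤ k → k ≤ n - 1 →
      U k = {w : ℝ | ∃ x ∈ Set.Icc (1 / 2 - ε) (1 / 2 + ε),
        ∃ u ∈ U (k + 1), ∃ v ∈ U (k + 2), w = 2 * x * u - v}) :
    ∀ k, 1 ≤ k → k ≤ n - 1 →
      sSup (U (n - k)) - sInf (U (n - k)) ≥ 4 * ε * (Nat.fib k : ℝ) := by
  open IntervalClenshaw in
  intro k _ hk
  have hε : 0 ≤ ε := hε₁.le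
  have hU : ∀ k ≤ n - 1, IsCompact (U (n - k)) ∧ (U (n - k)).Nonempty :=
    clenshawSet_induction hUrec (P := fun S => IsCompact S ∧ S.Nonempty)
      (by simp [hUn1]) (by simp [hUn])
      fun S T hS hT => ⟨isCompact_clenshawSet hS.1 hT.1, clenshawSet_nonempty hε hS.2 hT.2⟩
  refine mul_fib_le_of_add_le (w := fun k => width (U (n - k))) ?_ ?_ ?_ k hk
  · simp [width, hUn]
  · intro h₁
    rw [eq_clenshawSet_of_rec hUrec (k := 0) h₁, Nat.sub_zero, Nat.sub_zero, hUn, hUn1]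
    simpa using mul_le_width_clenshawSet hε isCompact_singleton isCompact_singleton
      (mem_singleton (1 : ℝ)) (mem_singleton (0 : ℝ))
  · intro j hj
    have hj₁ := hU (j + 1) (by omega)
    have hj₀ := hU j (by omega)
    rw [show n - (j + 2) = n - (j + 1 + 1) by rfl, eq_clenshawSet_of_rec hUrec hj,
      show n + 1 - (j + 1) = n - j by omega]
    exact width_add_width_le_width_clenshawSet hε hj₁.1 hj₀.1 hj₁.2 hj₀.2

/-- Exponential growth of interval widths in the naive interval Clenshaw
algorithm on `X = [1/2 − ε, 1/2 + ε]`, for the coefficients `aₙ = 1`,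
`aᵢ = 0` for `i < n`: the width of `U_{n−k}` is at least `4ε·F_k`. -/
theorem interval_clenshaw_exponential_growth (ε : ℝ) (hε₁ : 0 < ε) (hε₂ : ε ≤ 1 / 4)
    (n : ℕ) (hn : 2 ≤ n) (U : ℕ → Set ℝ)
    (hUn1 : U (n + 1) = {0}) (hUn : U n = {1})
    (hUrec : ∀ k, 1 ≤ k → k ≤ n - 1 →
      U k = {w : ℝ | ∃ x ∈ Set.Icc (1 / 2 - ε) (1 / 2 + ε),
        ∃ u ∈ U (k + 1), ∃ v ∈ U (k + 2), w = 2 * x * u - v}) :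
    ∀ k, 1 ≤ k → k ≤ n - 1 →
      sSup (U (n - k)) - sInf (U (n - k)) ≥ 4 * ε * (Nat.fib k : ℝ) :=
  interval_clenshaw_exponential_growth_general ε hε₁ n U hUn1 hUn hUrec
end
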